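/- arXiv:2310.05880 — 2 statements merged into one kernel-verified Lean document; each statement's English description precedes it below -/
import Mathlib

section
/- Let d(λ) := D(λ^T) denote the Spaltenstein duality map on D-partitions of 2N. Then: (i) for every D-partition λ of 2N, d(λ) is a special D-partition of 2N; (ii) for every special D-partition σ of 2N, d(d(σ)) = σ; consequently (iii) d ∘ d ∘ d = d on D-partitions of 2N. -/
/-- `p : ℕ → ℕ` represents a partition of `n`: `p i` is the `i`-th part (1-indexed),
non-increasing, with `p 0 = 0` and `p i = 0` for `i` beyond the number of parts. -/
def IsPartitionFn (n : ℕ) (p : ℕ → ℕ) : Prop :=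
  p 0 = 0 ∧ (∀ i j, 1 ≤ i → i ≤ j → p j ≤ p i) ∧ (∀ i, n < i → p i = 0) ∧
    ∑ i ∈ Finset.Icc 1 n, p i = n

/-- The multiplicity of `k` as a part of `p`. -/
noncomputable def partMult (p : ℕ → ℕ) (k : ℕ) : ℕ :=
  {i : ℕ | 1 ≤ i ∧ p i = k}.ncard

/-- The transpose (conjugate) partition: `(p^T)_k = #{i ≥ 1 : p_i ≥ k}`. -/
noncomputable def transposeFn (p : ℕ → ℕ) : ℕ → ℕ :=
  fun k => {i : ℕ | 1 ≤ i ∧ k ≤ p i}.ncard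

/-- A D-partition of `n`: every even part occurs with even multiplicity. -/
def IsDPartition (n : ℕ) (p : ℕ → ℕ) : Prop :=
  IsPartitionFn n p ∧ ∀ k, Even k → Even (partMult p k)

/-- A special D-partition: a D-partition whose transpose is a C-partition
(every odd part occurs with even multiplicity). -/
def IsSpecialDPartition (n : ℕ) (p : ℕ → ℕ) : Prop :=
  IsDPartition n p ∧ ∀ k, Odd k → Even (partMult (transposeFn p) k)
/-- `lam` dominates `mu` (componentwise partial sums). -/
def DominatesFn (lam mu : ℕ → ℕ) : Prop :=
  ∀ m, ∑ i ∈ Finset.Icc 1 m, mu i ≤ ∑ i ∈ Finset.Icc 1 m, lam i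

/-- `mu` is the D-collapse of `lam`: the greatest (in dominance order)
D-partition of `n` dominated by `lam`. -/
def IsDCollapseOf (n : ℕ) (lam mu : ℕ → ℕ) : Prop :=
  IsDPartition n mu ∧ DominatesFn lam mu ∧
    ∀ nu, IsDPartition n nu → DominatesFn lam nu → DominatesFn mu nu

open Classical in
/-- The D-collapse of `lam`, as a function. -/
noncomputable def Dcollapse (n : ℕ) (lam : ℕ → ℕ) : ℕ → ℕ :=
  if h : ∃ mu, IsDCollapseOf n lam mu then h.choose else fun _ => 0

/-- The Spaltenstein dual `d(p) = D(pᵀ)`. -/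
noncomputable def spaltDual (n : ℕ) (p : ℕ → ℕ) : ℕ → ℕ :=
  Dcollapse n (transposeFn p)

/-- A marked pair of `p`: an index `j ≥ 1` such that `p (2j)` and `p (2j+1)` are
both odd and `p (2j) > p (2j+1)`. -/
def markedSet (p : ℕ → ℕ) : Set ℕ :=
  {j : ℕ | 1 ≤ j ∧ Odd (p (2 * j)) ∧ Odd (p (2 * j + 1)) ∧ p (2 * j + 1) < p (2 * j)}

/-- The set of positions at which a non-special degeneration of `σ` occurs:
`σ (2j) = 2r+1`, `σ (2j+1) = ⋯ = σ (2j+2m) = 2r`, `σ (2j+2m+1) = 2r-1`. -/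
def nsdSet (σ : ℕ → ℕ) : Set ℕ :=
  {j : ℕ | 1 ≤ j ∧ ∃ r m : ℕ, 1 ≤ r ∧ σ (2 * j) = 2 * r + 1 ∧
    (∀ i, 2 * j + 1 ≤ i → i ≤ 2 * j + 2 * m → σ i = 2 * r) ∧
    σ (2 * j + 2 * m + 1) = 2 * r - 1}

namespace Spalt
open Finset

def Sp (p : ℕ → ℕ) (m : ℕ) : ℕ := ∑ i ∈ Finset.Icc 1 m, p i

lemma Sp_zero (p : ℕ → ℕ) : Sp p 0 = 0 := by simp [Sp]

lemma Sp_succ (p : ℕ → ℕ) (m : ℕ) : Sp p (m+1) = Sp p m + p (m+1) := by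
  rw [Sp, Sp, Finset.sum_Icc_succ_top (by omega)]

lemma Sp_mono (p : ℕ → ℕ) {m m' : ℕ} (h : m ≤ m') : Sp p m ≤ Sp p m' := by
  induction m' with
  | zero => have : m = 0 := by omega
            subst this; exact le_rfl
  | succ k ih =>
    rcases Nat.eq_or_lt_of_le h with rfl | h'
    · exact le_rfl
    · exact le_trans (ih (by omega)) (by rw [Sp_succ]; omega)

lemma Sp_sum (n : ℕ) (p : ℕ → ℕ) (hp : IsPartitionFn n p) : Sp p n = n := hp.2.2.2

lemma Sp_stab (n : ℕ) (p : ℕ → ℕ) (hp : IsPartitionFn n p) {m : ℕ} (h : n ≤ m) :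
    Sp p m = n := by
  have h2 : Sp p m = Sp p n := by
    rw [Sp, Sp]
    exact (Finset.sum_subset (Finset.Icc_subset_Icc_right h)
      (fun x hx hx' => hp.2.2.1 x (by simp only [Finset.mem_Icc] at hx hx'; omega))).symm
  rw [h2]; exact hp.2.2.2

lemma Sp_le (n : ℕ) (p : ℕ → ℕ) (hp : IsPartitionFn n p) (m : ℕ) : Sp p m ≤ n := by
  rcases le_or_gt m n with h | h
  · exact le_trans (Sp_mono p h) (le_of_eq hp.2.2.2)
  · exact le_of_eq (Sp_stab n p hp (by omega))

lemma part_le (n : ℕ) (p : ℕ → ℕ) (hp : IsPartitionFn n p) {i : ℕ} (hi : 1 ≤ i) :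
    p i ≤ n := by
  have h1 : p i ≤ Sp p i := by
    rcases Nat.exists_eq_add_of_le hi with ⟨j, rfl⟩
    rw [Nat.add_comm 1 j, Sp_succ]; omega
  exact le_trans h1 (Sp_le n p hp i)

lemma part_pos_le (n : ℕ) (p : ℕ → ℕ) (hp : IsPartitionFn n p) {i : ℕ} (h : 1 ≤ p i) :
    i ≤ n := by
  by_contra h'
  rw [hp.2.2.1 i (by omega)] at h; omega

end Spalt
namespace Spalt
open Finset

lemma tr_eq_card (n : ℕ) (p : ℕ → ℕ) (hp : IsPartitionFn n p) {k : ℕ} (hk : 1 ≤ k) :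
    transposeFn p k = ((Finset.Icc 1 n).filter fun i => k ≤ p i).card := by
  rw [transposeFn]
  have hset : {i : ℕ | 1 ≤ i ∧ k ≤ p i} =
      ↑((Finset.Icc 1 n).filter fun i => k ≤ p i) := by
    ext i
    simp only [Set.mem_setOf_eq, Finset.coe_filter, Finset.mem_Icc]
    constructor
    · rintro ⟨h1, h2⟩
      exact ⟨⟨h1, part_pos_le n p hp (le_trans hk h2)⟩, h2⟩
    · rintro ⟨⟨h1, _⟩, h2⟩; exact ⟨h1, h2⟩
  rw [hset, Set.ncard_coe_finset]

lemma tr_zero (p : ℕ → ℕ) : transposeFn p 0 = 0 := by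
  rw [transposeFn]
  have : {i : ℕ | 1 ≤ i ∧ 0 ≤ p i} = Set.Ici 1 := by
    ext i; simp [Set.mem_Ici]
  rw [this]
  exact Set.Infinite.ncard (Set.Ici_infinite 1)

lemma galois (n : ℕ) (p : ℕ → ℕ) (hp : IsPartitionFn n p) {i k : ℕ} (hi : 1 ≤ i)
    (hk : 1 ≤ k) : k ≤ p i ↔ i ≤ transposeFn p k := by
  rw [tr_eq_card n p hp hk]
  constructor
  · intro h
    have hsub : Finset.Icc 1 i ⊆ (Finset.Icc 1 n).filter fun j => k ≤ p j := by
      intro j hj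
      simp only [Finset.mem_Icc] at hj
      simp only [Finset.mem_filter, Finset.mem_Icc]
      have hpj : p i ≤ p j := hp.2.1 j i hj.1 hj.2
      exact ⟨⟨hj.1, le_trans hj.2 (part_pos_le n p hp (by omega))⟩, by omega⟩
    calc i = (Finset.Icc 1 i).card := by rw [Nat.card_Icc]; omega
    _ ≤ _ := Finset.card_le_card hsub
  · intro h
    by_contra hcon
    push_neg at hcon
    have hsub : (Finset.Icc 1 n).filter (fun j => k ≤ p j) ⊆ Finset.Ico 1 i := by
      intro j hj
      simp only [Finset.mem_filter, Finset.mem_Icc] at hj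
      simp only [Finset.mem_Ico]
      refine ⟨hj.1.1, ?_⟩
      by_contra hji
      exact absurd (le_trans hj.2 (hp.2.1 i j hi (by omega))) (by omega)
    have := Finset.card_le_card hsub
    rw [Nat.card_Ico] at this
    omega

lemma tr_partition (n : ℕ) (p : ℕ → ℕ) (hp : IsPartitionFn n p) :
    IsPartitionFn n (transposeFn p) := by
  refine ⟨tr_zero p, ?_, ?_, ?_⟩
  · intro k k' hk hkk'
    rw [tr_eq_card n p hp hk, tr_eq_card n p hp (by omega)]
    apply Finset.card_le_card
    intro j hj
    simp only [Finset.mem_filter] at hj ⊢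
    exact ⟨hj.1, by omega⟩
  · intro k hk
    have hn1 : 1 ≤ k := by
      rcases Nat.eq_zero_or_pos n with rfl | h
      · omega
      · omega
    rw [tr_eq_card n p hp hn1]
    convert Finset.card_empty
    rw [Finset.filter_eq_empty_iff]
    intro i hi
    simp only [Finset.mem_Icc] at hi
    have := part_le n p hp hi.1
    omega
  · have key : ∀ k ∈ Finset.Icc 1 n, transposeFn p k =
        ∑ i ∈ Finset.Icc 1 n, (if k ≤ p i then 1 else 0) := by
      intro k hk
      simp only [Finset.mem_Icc] at hk
      rw [tr_eq_card n p hp hk.1, Finset.card_filter]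
    rw [Finset.sum_congr rfl key, Finset.sum_comm]
    have inner : ∀ i ∈ Finset.Icc 1 n,
        ∑ k ∈ Finset.Icc 1 n, (if k ≤ p i then 1 else 0) = p i := by
      intro i hi
      simp only [Finset.mem_Icc] at hi
      rw [← Finset.card_filter]
      have : (Finset.Icc 1 n).filter (fun k => k ≤ p i) = Finset.Icc 1 (p i) := by
        ext k
        simp only [Finset.mem_filter, Finset.mem_Icc]
        have := part_le n p hp hi.1
        omega
      rw [this, Nat.card_Icc]
      omega
    rw [Finset.sum_congr rfl inner]
    exact hp.2.2.2

lemma Sp_tr_min (n : ℕ) (p : ℕ → ℕ) (hp : IsPartitionFn n p) (m : ℕ) :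
    Sp (transposeFn p) m = ∑ i ∈ Finset.Icc 1 n, min (p i) m := by
  rw [Sp]
  have key : ∀ k ∈ Finset.Icc 1 m, transposeFn p k =
      ∑ i ∈ Finset.Icc 1 n, (if k ≤ p i then 1 else 0) := by
    intro k hk
    simp only [Finset.mem_Icc] at hk
    rw [tr_eq_card n p hp hk.1, Finset.card_filter]
  rw [Finset.sum_congr rfl key, Finset.sum_comm]
  apply Finset.sum_congr rfl
  intro i _
  rw [← Finset.card_filter]
  have : (Finset.Icc 1 m).filter (fun k => k ≤ p i) = Finset.Icc 1 (min (p i) m) := by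
    ext k
    simp only [Finset.mem_filter, Finset.mem_Icc]
    omega
  rw [this, Nat.card_Icc]
  omega

lemma tr_tr (n : ℕ) (p : ℕ → ℕ) (hp : IsPartitionFn n p) :
    transposeFn (transposeFn p) = p := by
  funext i
  rcases Nat.eq_zero_or_pos i with rfl | hi
  · rw [tr_zero, hp.1]
  · rw [transposeFn]
    have hset : {k : ℕ | 1 ≤ k ∧ i ≤ transposeFn p k} = ↑(Finset.Icc 1 (p i)) := by
      ext k
      simp only [Set.mem_setOf_eq, Finset.coe_Icc, Set.mem_Icc]
      constructor
      · rintro ⟨h1, h2⟩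
        exact ⟨h1, (galois n p hp hi h1).mpr h2⟩
      · rintro ⟨h1, h2⟩
        exact ⟨h1, (galois n p hp hi h1).mp h2⟩
    rw [hset, Set.ncard_coe_finset, Nat.card_Icc]
    omega

end Spalt
namespace Spalt
open Finset

lemma Icc_split (a b : ℕ) (f : ℕ → ℕ) (h : a ≤ b) :
    (Finset.Icc 1 b).sum f = (Finset.Icc 1 a).sum f + (Finset.Icc (a+1) b).sum f := by
  have e : ∀ (x : ℕ), Finset.Icc 1 x = Finset.Ioc 0 x := fun x => Finset.Icc_add_one_left_eq_Ioc 0 x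
  rw [e, e, Finset.Icc_add_one_left_eq_Ioc a b]
  exact (Finset.sum_Ioc_consecutive f (Nat.zero_le a) h).symm

lemma toolT (n : ℕ) (p : ℕ → ℕ) (hp : IsPartitionFn n p) {m j : ℕ} (hm : 1 ≤ m)
    (h1 : p (m+1) ≤ j) (h2 : j ≤ p m) :
    Sp p m + Sp (transposeFn p) j = n + m * j := by
  rw [Sp_tr_min n p hp j]
  rcases le_or_gt m n with hmn | hmn
  · have hsplit := Icc_split m n (fun i => min (p i) j) hmn
    have e1 : ∑ i ∈ Finset.Icc 1 m, min (p i) j = m * j := by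
      have h : ∀ i ∈ Finset.Icc 1 m, min (p i) j = j := by
        intro i hi
        simp only [Finset.mem_Icc] at hi
        have := hp.2.1 i m hi.1 hi.2
        omega
      rw [Finset.sum_congr rfl h, Finset.sum_const, Nat.card_Icc]
      simp [Nat.mul_comm]
    have e2 : ∑ i ∈ Finset.Icc (m+1) n, min (p i) j = ∑ i ∈ Finset.Icc (m+1) n, p i := by
      apply Finset.sum_congr rfl
      intro i hi
      simp only [Finset.mem_Icc] at hi
      have := hp.2.1 (m+1) i (by omega) hi.1
      omega
    have e3 : Sp p m + ∑ i ∈ Finset.Icc (m+1) n, p i = n := by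
      have := Icc_split m n (fun i => p i) hmn
      rw [Sp]
      have hn := hp.2.2.2
      omega
    omega
  · have hj : j = 0 := by
      have := hp.2.2.1 m hmn
      omega
    subst hj
    simp only [Nat.min_zero, Finset.sum_const, Nat.smul_one_eq_cast, Nat.mul_zero]
    rw [Sp_stab n p hp (by omega)]
    simp

lemma toolT_le (n : ℕ) (p : ℕ → ℕ) (hp : IsPartitionFn n p) (m j : ℕ) :
    Sp (transposeFn p) m + Sp p j ≤ n + m * j := by
  rw [Sp_tr_min n p hp m]
  have hcomm : j * m = m * j := Nat.mul_comm j m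
  rcases le_or_gt j n with hjn | hjn
  · have hsplit := Icc_split j n (fun i => min (p i) m) hjn
    have e1 : ∑ i ∈ Finset.Icc 1 j, min (p i) m ≤ j * m := by
      calc ∑ i ∈ Finset.Icc 1 j, min (p i) m ≤ ∑ _i ∈ Finset.Icc 1 j, m :=
        Finset.sum_le_sum (fun i _ => Nat.min_le_right _ _)
      _ = j * m := by rw [Finset.sum_const, Nat.card_Icc]; simp [Nat.mul_comm]
    have e2 : ∑ i ∈ Finset.Icc (j+1) n, min (p i) m ≤ ∑ i ∈ Finset.Icc (j+1) n, p i :=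
      Finset.sum_le_sum (fun i _ => Nat.min_le_left _ _)
    have e3 : Sp p j + ∑ i ∈ Finset.Icc (j+1) n, p i = n := by
      have := Icc_split j n (fun i => p i) hjn
      rw [Sp]
      have hn := hp.2.2.2
      omega
    omega
  · have e1 : ∑ i ∈ Finset.Icc 1 n, min (p i) m ≤ n * m := by
      calc ∑ i ∈ Finset.Icc 1 n, min (p i) m ≤ ∑ _i ∈ Finset.Icc 1 n, m :=
        Finset.sum_le_sum (fun i _ => Nat.min_le_right _ _)
      _ = n * m := by rw [Finset.sum_const, Nat.card_Icc]; simp [Nat.mul_comm]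
    have e2 : Sp p j ≤ n := Sp_le n p hp j
    have e4 : n * m ≤ j * m := Nat.mul_le_mul_right m (by omega)
    omega

lemma dom_tr (n : ℕ) (p r : ℕ → ℕ) (hp : IsPartitionFn n p) (hr : IsPartitionFn n r)
    (h : ∀ m, Sp p m ≤ Sp r m) (m : ℕ) :
    Sp (transposeFn r) m ≤ Sp (transposeFn p) m := by
  rcases Nat.eq_zero_or_pos m with rfl | hm
  · rw [Sp_zero, Sp_zero]
  · have htp := tr_partition n p hp
    have key := toolT n (transposeFn p) htp (m := m) (j := transposeFn p m) hm
      (htp.2.1 m (m+1) (by omega) (by omega)) le_rfl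
    rw [tr_tr n p hp] at key
    have hle := toolT_le n r hr m (transposeFn p m)
    have := h (transposeFn p m)
    omega

end Spalt
namespace Spalt
open Finset

lemma partMult_eq_card (n : ℕ) (p : ℕ → ℕ) (hp : IsPartitionFn n p) {k : ℕ} (hk : 1 ≤ k) :
    partMult p k = ((Finset.Icc 1 n).filter fun i => p i = k).card := by
  rw [partMult]
  have hset : {i : ℕ | 1 ≤ i ∧ p i = k} = ↑((Finset.Icc 1 n).filter fun i => p i = k) := by
    ext i
    simp only [Set.mem_setOf_eq, Finset.coe_filter, Finset.mem_Icc]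
    constructor
    · rintro ⟨h1, h2⟩
      exact ⟨⟨h1, part_pos_le n p hp (by omega)⟩, h2⟩
    · rintro ⟨⟨h1, _⟩, h2⟩; exact ⟨h1, h2⟩
  rw [hset, Set.ncard_coe_finset]

lemma partMult_zero_even (n : ℕ) (p : ℕ → ℕ) (hp : IsPartitionFn n p) :
    Even (partMult p 0) := by
  have : {i : ℕ | 1 ≤ i ∧ p i = 0}.Infinite := by
    apply Set.Infinite.mono (s := Set.Ici (n+1))
    · intro i hi
      simp only [Set.mem_Ici] at hi
      exact ⟨by omega, hp.2.2.1 i (by omega)⟩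
    · exact Set.Ici_infinite _
  rw [partMult, Set.Infinite.ncard this]
  exact Even.zero

lemma partMult_add_tr (n : ℕ) (p : ℕ → ℕ) (hp : IsPartitionFn n p) {k : ℕ} (hk : 1 ≤ k) :
    partMult p k + transposeFn p (k+1) = transposeFn p k := by
  rw [partMult_eq_card n p hp hk, tr_eq_card n p hp hk, tr_eq_card n p hp (by omega : 1 ≤ k+1)]
  rw [← Finset.card_union_of_disjoint]
  · congr 1
    ext i
    simp only [Finset.mem_union, Finset.mem_filter, Finset.mem_Icc]
    omega
  · rw [Finset.disjoint_filter]
    intro i _ h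
    omega

lemma Sp_two (t : ℕ → ℕ) (a : ℕ) : Sp t (a+2) = Sp t a + (t (a+1) + t (a+2)) := by
  have : a + 2 = a + 1 + 1 := by omega
  rw [this, Sp_succ, Sp_succ]
  have : a + 1 + 1 = a + 2 := by omega
  rw [this]
  ring

lemma Sp_pair_split (t : ℕ → ℕ) (T : ℕ) :
    Sp t (2*T+1) = Sp t 1 + ∑ s ∈ Finset.Icc 1 T, (t (2*s) + t (2*s+1)) := by
  induction T with
  | zero => simp
  | succ u ih =>
    have h1 : 2*(u+1)+1 = (2*u+1) + 2 := by omega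
    rw [h1, Sp_two, ih, Finset.sum_Icc_succ_top (by omega : 1 ≤ u+1)]
    have e1 : 2*u+1+1 = 2*(u+1) := by omega
    have e2 : 2*u+1+2 = 2*(u+1)+1 := by omega
    rw [e1, e2]
    ring

lemma Sp_pair_split' (t : ℕ → ℕ) (T : ℕ) :
    Sp t (2*T) = ∑ s ∈ Finset.Icc 1 T, (t (2*s-1) + t (2*s)) := by
  induction T with
  | zero => simp [Sp_zero]
  | succ u ih =>
    have h1 : 2*(u+1) = (2*u) + 2 := by omega
    rw [h1, Sp_two, ih, Finset.sum_Icc_succ_top (by omega : 1 ≤ u+1)]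
    have e1 : 2*u+1 = 2*(u+1)-1 := by omega
    have e2 : 2*u+2 = 2*(u+1) := by omega
    rw [e1, e2]

lemma even_sum_pairs {T : ℕ} {f : ℕ → ℕ} (h : ∀ s, 1 ≤ s → s ≤ T → Even (f s)) :
    Even (∑ s ∈ Finset.Icc 1 T, f s) := by
  induction T with
  | zero => simp
  | succ u ih =>
    rw [Finset.sum_Icc_succ_top (by omega : 1 ≤ u+1)]
    exact Even.add (ih (fun s h1 h2 => h s h1 (by omega))) (h (u+1) (by omega) le_rfl)

lemma Dchar (n : ℕ) (p : ℕ → ℕ) (hp : IsPartitionFn n p) (hn : Even n) :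
    (∀ k, Even k → Even (partMult p k)) ↔ (∀ t, Even (Sp (transposeFn p) (2*t+1))) := by
  have htp := tr_partition n p hp
  constructor
  · intro h
    have hpair : ∀ s, 1 ≤ s → Even (transposeFn p (2*s) + transposeFn p (2*s+1)) := by
      intro s hs
      have hm := partMult_add_tr n p hp (k := 2*s) (by omega)
      have he := h (2*s) ⟨s, by omega⟩
      have : transposeFn p (2*s) + transposeFn p (2*s+1)
          = partMult p (2*s) + 2 * transposeFn p (2*s+1) := by omega
      rw [this]
      exact Even.add he (even_two_mul _)
    obtain ⟨N2, hN2⟩ := hn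
    have ht1 : Even (Sp (transposeFn p) 1) := by
      have hsum := Sp_pair_split (transposeFn p) N2
      have hstab : Sp (transposeFn p) (2*N2+1) = n := Sp_stab n _ htp (by omega)
      have hev : Even (∑ s ∈ Finset.Icc 1 N2, (transposeFn p (2*s) + transposeFn p (2*s+1))) :=
        even_sum_pairs (fun s h1 _ => hpair s h1)
      obtain ⟨a, ha⟩ := hev
      have hs1 : Sp (transposeFn p) 1 = n - (a + a) := by omega
      rw [hs1]
      obtain ⟨b, hb⟩ := (⟨N2, by omega⟩ : Even n)
      exact ⟨b - a, by omega⟩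
    intro t
    rw [Sp_pair_split (transposeFn p) t]
    exact Even.add ht1 (even_sum_pairs (fun s h1 _ => hpair s h1))
  · intro h k hk
    rcases Nat.eq_zero_or_pos k with rfl | hkpos
    · exact partMult_zero_even n p hp
    · obtain ⟨s, rfl⟩ := hk
      have hs : 1 ≤ s := by omega
      have h1 := h s
      have h2 := h (s-1)
      have e : 2*(s-1)+1 = 2*s - 1 := by omega
      rw [e] at h2
      have hdiff : Sp (transposeFn p) (2*s+1) =
          Sp (transposeFn p) (2*s-1) + (transposeFn p (2*s) + transposeFn p (2*s+1)) := by
        have h0 := Sp_two (transposeFn p) (2*s-1)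
        have e2 : 2*s-1+1 = 2*s := by omega
        have e3 : 2*s-1+2 = 2*s+1 := by omega
        rw [e2, e3] at h0
        exact h0
      have hm := partMult_add_tr n p hp (k := s+s) (by omega)
      have hpe : Even (transposeFn p (2*s) + transposeFn p (2*s+1)) := by
        obtain ⟨a, ha⟩ := h1
        obtain ⟨b, hb⟩ := h2
        exact ⟨a - b, by omega⟩
      obtain ⟨c, hc⟩ := hpe
      have e4 : 2*s = s + s := by omega
      rw [e4] at hc
      exact ⟨c - transposeFn p (s+s+1), by omega⟩

lemma Cchar (n : ℕ) (p : ℕ → ℕ) (hp : IsPartitionFn n p) :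
    (∀ k, Odd k → Even (partMult p k)) ↔ (∀ t, Even (Sp (transposeFn p) (2*t))) := by
  constructor
  · intro h t
    rw [Sp_pair_split' (transposeFn p) t]
    apply even_sum_pairs
    intro s h1 _
    have hm := partMult_add_tr n p hp (k := 2*s-1) (by omega)
    have he := h (2*s-1) ⟨s-1, by omega⟩
    have e2 : 2*s-1+1 = 2*s := by omega
    rw [e2] at hm
    have : transposeFn p (2*s-1) + transposeFn p (2*s)
        = partMult p (2*s-1) + 2 * transposeFn p (2*s) := by omega
    rw [this]
    exact Even.add he (even_two_mul _)
  · intro h k hk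
    obtain ⟨s', rfl⟩ := hk
    set s := s' + 1
    have hs : 1 ≤ s := by omega
    have hodd : 2*s' + 1 = 2*s - 1 := by omega
    rw [hodd]
    have h1 := h s
    have h2 := h (s-1)
    have e : 2*(s-1) = 2*s - 2 := by omega
    rw [e] at h2
    have hdiff : Sp (transposeFn p) (2*s) =
        Sp (transposeFn p) (2*s-2) + (transposeFn p (2*s-1) + transposeFn p (2*s)) := by
      have h0 := Sp_two (transposeFn p) (2*s-2)
      have e2 : 2*s-2+1 = 2*s-1 := by omega
      have e3 : 2*s-2+2 = 2*s := by omega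
      rw [e2, e3] at h0
      exact h0
    have hm := partMult_add_tr n p hp (k := 2*s-1) (by omega)
    have e2 : 2*s-1+1 = 2*s := by omega
    rw [e2] at hm
    have hpe : Even (transposeFn p (2*s-1) + transposeFn p (2*s)) := by
      obtain ⟨a, ha⟩ := h1
      obtain ⟨b, hb⟩ := h2
      exact ⟨a - b, by omega⟩
    obtain ⟨c, hc⟩ := hpe
    exact ⟨c - transposeFn p (2*s), by omega⟩

end Spalt
namespace Spalt
open Finset

def ValidS (n : ℕ) (B S : ℕ → ℕ) : Prop :=
  S 0 = 0 ∧ (∀ m, S m ≤ S (m+1)) ∧ (∀ m, S (m+2) + S m ≤ 2 * S (m+1)) ∧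
  (∀ t, Even (S (2*t+1))) ∧ (∀ m, B m ≤ S m) ∧ (∀ m, n ≤ m → S m = n)

noncomputable def Fmin (n : ℕ) (B : ℕ → ℕ) (m : ℕ) : ℕ :=
  sInf {v | ∃ S, ValidS n B S ∧ S m = v}

lemma Fmin_le (n : ℕ) (B S : ℕ → ℕ) (hS : ValidS n B S) (m : ℕ) :
    Fmin n B m ≤ S m :=
  Nat.sInf_le ⟨S, hS, rfl⟩

lemma Fmin_achieved (n : ℕ) (B : ℕ → ℕ) (hex : ∃ S, ValidS n B S) (m : ℕ) :
    ∃ S, ValidS n B S ∧ S m = Fmin n B m := by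
  have hne : {v | ∃ S, ValidS n B S ∧ S m = v}.Nonempty := by
    obtain ⟨S, hS⟩ := hex
    exact ⟨S m, S, hS, rfl⟩
  exact Nat.sInf_mem hne

lemma validS_Fmin (n : ℕ) (B : ℕ → ℕ) (hex : ∃ S, ValidS n B S) :
    ValidS n B (Fmin n B) := by
  refine ⟨?_, ?_, ?_, ?_, ?_, ?_⟩
  · obtain ⟨S, hS, hSe⟩ := Fmin_achieved n B hex 0
    rw [← hSe, hS.1]
  · intro m
    obtain ⟨S, hS, hSe⟩ := Fmin_achieved n B hex (m+1)
    calc Fmin n B m ≤ S m := Fmin_le n B S hS m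
    _ ≤ S (m+1) := hS.2.1 m
    _ = Fmin n B (m+1) := hSe
  · intro m
    obtain ⟨S, hS, hSe⟩ := Fmin_achieved n B hex (m+1)
    have h1 := Fmin_le n B S hS (m+2)
    have h2 := Fmin_le n B S hS m
    have h3 := hS.2.2.1 m
    omega
  · intro t
    obtain ⟨S, hS, hSe⟩ := Fmin_achieved n B hex (2*t+1)
    rw [← hSe]
    exact hS.2.2.2.1 t
  · intro m
    obtain ⟨S, hS, hSe⟩ := Fmin_achieved n B hex m
    rw [← hSe]
    exact hS.2.2.2.2.1 m
  · intro m hm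
    obtain ⟨S, hS, hSe⟩ := Fmin_achieved n B hex m
    rw [← hSe]
    exact hS.2.2.2.2.2 m hm

def pOf (S : ℕ → ℕ) (i : ℕ) : ℕ := S i - S (i-1)

lemma pOf_zero (S : ℕ → ℕ) : pOf S 0 = 0 := by simp [pOf]

lemma Sp_pOf (n : ℕ) (B S : ℕ → ℕ) (hv : ValidS n B S) (m : ℕ) : Sp (pOf S) m = S m := by
  induction m with
  | zero => rw [Sp_zero, hv.1]
  | succ k ih =>
    rw [Sp_succ, ih, pOf]
    have h1 := hv.2.1 k
    have h2 : (k+1) - 1 = k := by omega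
    rw [h2]
    omega

lemma pOf_partition (n : ℕ) (B S : ℕ → ℕ) (hv : ValidS n B S) : IsPartitionFn n (pOf S) := by
  have hmono1 : ∀ i, 1 ≤ i → pOf S (i+1) ≤ pOf S i := by
    intro i hi
    obtain ⟨j, rfl⟩ : ∃ j, i = j + 1 := ⟨i - 1, by omega⟩
    have h1 := hv.2.2.1 j
    have h2 := hv.2.1 j
    have h3 := hv.2.1 (j+1)
    simp only [pOf, Nat.add_sub_cancel]
    have e : j+1+1 = j+2 := by omega
    rw [e]
    omega
  refine ⟨pOf_zero S, ?_, ?_, ?_⟩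
  · intro i j hi hij
    induction j with
    | zero => omega
    | succ k ih =>
      rcases Nat.eq_or_lt_of_le hij with rfl | h'
      · exact le_rfl
      · exact le_trans (hmono1 k (by omega)) (ih (by omega))
  · intro i hi
    obtain ⟨j, rfl⟩ : ∃ j, i = j + 1 := ⟨i - 1, by omega⟩
    have h1 := hv.2.2.2.2.2 (j+1) (by omega)
    have h2 := hv.2.2.2.2.2 j (by omega)
    simp only [pOf, Nat.add_sub_cancel]
    omega
  · have := Sp_pOf n B S hv n
    rw [← Sp]
    rw [this]
    exact hv.2.2.2.2.2 n le_rfl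

lemma pOf_Sp (p : ℕ → ℕ) (h0 : p 0 = 0) : pOf (Sp p) = p := by
  funext i
  rcases Nat.eq_zero_or_pos i with rfl | hi
  · rw [pOf_zero, h0]
  · obtain ⟨j, rfl⟩ : ∃ j, i = j + 1 := ⟨i - 1, by omega⟩
    simp only [pOf, Nat.add_sub_cancel]
    rw [Sp_succ]
    omega

lemma validS_of_partition (n : ℕ) (B p : ℕ → ℕ) (hp : IsPartitionFn n p)
    (hpar : ∀ t, Even (Sp p (2*t+1))) (hB : ∀ m, B m ≤ Sp p m) :
    ValidS n B (Sp p) := by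
  refine ⟨Sp_zero p, ?_, ?_, hpar, hB, fun m hm => Sp_stab n p hp hm⟩
  · intro m
    rw [Sp_succ]
    omega
  · intro m
    have e1 : Sp p (m+2) = Sp p (m+1) + p (m+2) := Sp_succ p (m+1)
    have e2 : Sp p (m+1) = Sp p m + p (m+1) := Sp_succ p m
    have h3 : p (m+2) ≤ p (m+1) := hp.2.1 (m+1) (m+2) (by omega) (by omega)
    omega

lemma Stop_valid (n : ℕ) (B : ℕ → ℕ) (hn : Even n) (hB0 : B 0 = 0) (hBle : ∀ m, B m ≤ n) :
    ValidS n B (fun m => if m = 0 then 0 else n) := by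
  refine ⟨by simp, ?_, ?_, ?_, ?_, ?_⟩
  · intro m
    rcases Nat.eq_zero_or_pos m with rfl | hm
    · simp
    · simp only [if_neg (by omega : ¬(m = 0)), if_neg (by omega : ¬(m+1 = 0))]
      exact le_rfl
  · intro m
    rcases Nat.eq_zero_or_pos m with rfl | hm
    · simp
      omega
    · simp only [if_neg (by omega : ¬(m = 0)), if_neg (by omega : ¬(m+1 = 0)),
        if_neg (by omega : ¬(m+2 = 0))]
      omega
  · intro t
    simp only [if_neg (by omega : ¬(2*t+1 = 0))]
    exact hn
  · intro m
    rcases Nat.eq_zero_or_pos m with rfl | hm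
    · simp [hB0]
    · simp only [if_neg (by omega : ¬(m = 0))]
      exact hBle m
  · intro m hm
    rcases Nat.eq_zero_or_pos m with rfl | hm'
    · simp; omega
    · simp [if_neg (by omega : ¬(m = 0))]

lemma exists_valid (n : ℕ) (B : ℕ → ℕ) (hn : Even n) (hB0 : B 0 = 0) (hBle : ∀ m, B m ≤ n) :
    ∃ S, ValidS n B S :=
  ⟨_, Stop_valid n B hn hB0 hBle⟩

end Spalt
namespace Spalt
open Finset

noncomputable def DC (n : ℕ) (lam : ℕ → ℕ) : ℕ → ℕ :=
  transposeFn (pOf (Fmin n (Sp (transposeFn lam))))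

lemma DC_isCollapse (n : ℕ) (lam : ℕ → ℕ) (hn : Even n) (hlam : IsPartitionFn n lam) :
    IsDCollapseOf n lam (DC n lam) := by
  have htl : IsPartitionFn n (transposeFn lam) := tr_partition n lam hlam
  set B := Sp (transposeFn lam) with hB
  have hex : ∃ S, ValidS n B S :=
    exists_valid n B hn (Sp_zero _) (fun m => Sp_le n _ htl m)
  have hv : ValidS n B (Fmin n B) := validS_Fmin n B hex
  set q := pOf (Fmin n B) with hq
  have hqp : IsPartitionFn n q := pOf_partition n B _ hv
  have hSpq : ∀ m, Sp q m = Fmin n B m := Sp_pOf n B _ hv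
  have hmu : IsPartitionFn n (DC n lam) := tr_partition n q hqp
  have htrmu : transposeFn (DC n lam) = q := tr_tr n q hqp
  have hDmu : IsDPartition n (DC n lam) := by
    refine ⟨hmu, ?_⟩
    rw [Dchar n (DC n lam) hmu hn, htrmu]
    intro t
    rw [hSpq]
    exact hv.2.2.2.1 t
  have hdom : DominatesFn lam (DC n lam) := by
    intro m
    have h1 : ∀ j, Sp (transposeFn lam) j ≤ Sp q j := by
      intro j
      rw [hSpq]
      exact hv.2.2.2.2.1 j
    have h2 := dom_tr n (transposeFn lam) q htl hqp h1 m
    rw [tr_tr n lam hlam] at h2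
    exact h2
  refine ⟨hDmu, hdom, ?_⟩
  intro nu hnu hdomnu
  have hnup := hnu.1
  have htnu : IsPartitionFn n (transposeFn nu) := tr_partition n nu hnup
  have hvnu : ValidS n B (Sp (transposeFn nu)) := by
    apply validS_of_partition n B (transposeFn nu) htnu
    · exact (Dchar n nu hnup hn).mp hnu.2
    · exact fun m => dom_tr n nu lam hnup hlam hdomnu m
  intro m
  have h1 : ∀ j, Sp q j ≤ Sp (transposeFn nu) j := by
    intro j
    rw [hSpq]
    exact Fmin_le n B _ hvnu j
  have h2 := dom_tr n q (transposeFn nu) hqp htnu h1 m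
  rw [tr_tr n nu hnup] at h2
  exact h2

lemma Sp_dominates (lam mu : ℕ → ℕ) :
    DominatesFn lam mu ↔ ∀ m, Sp mu m ≤ Sp lam m := Iff.rfl

lemma collapse_unique (n : ℕ) (lam mu1 mu2 : ℕ → ℕ)
    (h1 : IsDCollapseOf n lam mu1) (h2 : IsDCollapseOf n lam mu2) : mu1 = mu2 := by
  have d12 : DominatesFn mu1 mu2 := h1.2.2 mu2 h2.1 h2.2.1
  have d21 : DominatesFn mu2 mu1 := h2.2.2 mu1 h1.1 h1.2.1
  have hSeq : ∀ m, Sp mu1 m = Sp mu2 m := fun m => le_antisymm (d21 m) (d12 m)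
  funext i
  rcases Nat.eq_zero_or_pos i with rfl | hi
  · rw [h1.1.1.1, h2.1.1.1]
  · obtain ⟨j, rfl⟩ : ∃ j, i = j + 1 := ⟨i - 1, by omega⟩
    have e1 := Sp_succ mu1 j
    have e2 := Sp_succ mu2 j
    have := hSeq j
    have := hSeq (j+1)
    omega

lemma Dcollapse_eq (n : ℕ) (lam mu : ℕ → ℕ) (h : IsDCollapseOf n lam mu) :
    Dcollapse n lam = mu := by
  rw [Dcollapse]
  have hex : ∃ m, IsDCollapseOf n lam m := ⟨mu, h⟩
  rw [dif_pos hex]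
  exact collapse_unique n lam _ mu hex.choose_spec h

lemma spaltDual_eq (n : ℕ) (p : ℕ → ℕ) (hn : Even n) (hp : IsPartitionFn n p) :
    spaltDual n p = transposeFn (pOf (Fmin n (Sp p))) := by
  rw [spaltDual, Dcollapse_eq n (transposeFn p) _
    (DC_isCollapse n (transposeFn p) hn (tr_partition n p hp)), DC, tr_tr n p hp]

lemma spaltDual_isCollapse (n : ℕ) (p : ℕ → ℕ) (hn : Even n) (hp : IsPartitionFn n p) :
    IsDCollapseOf n (transposeFn p) (spaltDual n p) := by
  rw [spaltDual, Dcollapse_eq n (transposeFn p) _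
    (DC_isCollapse n (transposeFn p) hn (tr_partition n p hp))]
  exact DC_isCollapse n (transposeFn p) hn (tr_partition n p hp)

end Spalt
namespace Spalt
open Finset

lemma lemA (n : ℕ) (lam : ℕ → ℕ) (hn : Even n) (hp : IsPartitionFn n lam)
    (hD : ∀ t, Even (Sp (transposeFn lam) (2*t+1))) {m : ℕ} (hm1 : 1 ≤ m) (hme : m % 2 = 0)
    (hodd : Sp lam m % 2 = 1) : lam m = lam (m+1) ∧ lam m % 2 = 0 := by
  by_contra hcon
  have hmono : lam (m+1) ≤ lam m := hp.2.1 m (m+1) hm1 (by omega)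
  have hj : ∃ j, lam (m+1) ≤ j ∧ j ≤ lam m ∧ j % 2 = 1 := by
    rcases Nat.even_or_odd (lam m) with he | ho
    · rw [Nat.even_iff] at he
      rcases Nat.eq_or_lt_of_le hmono with heq | hlt
      · exact absurd ⟨heq.symm, he⟩ hcon
      · exact ⟨lam m - 1, by omega, by omega, by omega⟩
    · rw [Nat.odd_iff] at ho
      exact ⟨lam m, hmono, le_rfl, ho⟩
  obtain ⟨j, hj1, hj2, hj3⟩ := hj
  have htool := toolT n lam hp hm1 hj1 hj2
  obtain ⟨s, hs⟩ : ∃ s, j = 2*s+1 := ⟨j / 2, by omega⟩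
  have hDs := hD s
  rw [← hs, Nat.even_iff] at hDs
  rw [Nat.even_iff] at hn
  have hmj : (m * j) % 2 = 0 := by
    obtain ⟨a, rfl⟩ : ∃ a, m = 2*a := ⟨m / 2, by omega⟩
    have : 2*a*j = 2*(a*j) := by ring
    rw [this]
    omega
  omega

lemma Fmin_dec (n : ℕ) (B : ℕ → ℕ) (hex : ∃ S, ValidS n B S) (s : ℕ)
    (hbase : B (2*s+2) + 1 ≤ Fmin n B (2*s+2))
    (hgap1 : Fmin n B (2*s+1) + 1 ≤ Fmin n B (2*s+2))
    (hgap2 : Fmin n B (2*s+3) + Fmin n B (2*s+1) + 2 ≤ 2 * Fmin n B (2*s+2))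
    (hlt : 2*s+2 < n) : False := by
  have hv := validS_Fmin n B hex
  set F := Fmin n B with hF
  set G := fun m => if m = 2*s+2 then F (2*s+2) - 1 else F m with hG
  have hG2 : G (2*s+2) = F (2*s+2) - 1 := by simp [hG]
  have hGne : ∀ m, m ≠ 2*s+2 → G m = F m := by
    intro m hm
    simp [hG, hm]
  have hGvalid : ValidS n B G := by
    refine ⟨?_, ?_, ?_, ?_, ?_, ?_⟩
    · rw [hGne 0 (by omega)]
      exact hv.1
    · intro m
      rcases eq_or_ne m (2*s+2) with rfl | hm
      · rw [hG2, hGne (2*s+2+1) (by omega)]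
        have := hv.2.1 (2*s+2)
        omega
      · rcases eq_or_ne (m+1) (2*s+2) with he | hne2
        · rw [hGne m hm, he, hG2]
          obtain rfl : m = 2*s+1 := by omega
          omega
        · rw [hGne m hm, hGne (m+1) hne2]
          exact hv.2.1 m
    · intro m
      have hcon := hv.2.2.1 m
      rcases eq_or_ne m (2*s) with rfl | h0
      · rw [hGne (2*s) (by omega), hGne (2*s+1) (by omega),
          show 2*s+2 = 2*s+2 from rfl]
        rw [show (2*s)+2 = 2*s+2 from by omega, hG2]
        rw [show (2*s)+1+1 = 2*s+2 from by omega, show (2*s)+1 = 2*s+1 from rfl] at hcon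
        omega
      · rcases eq_or_ne m (2*s+1) with rfl | h1
        · rw [show (2*s+1)+2 = 2*s+3 from by omega, show (2*s+1)+1 = 2*s+2 from by omega,
            hGne (2*s+3) (by omega), hGne (2*s+1) (by omega), hG2]
          omega
        · rcases eq_or_ne m (2*s+2) with rfl | h2
          · rw [hG2, hGne (2*s+2+2) (by omega), hGne (2*s+2+1) (by omega)]
            omega
          · rw [hGne m h2, hGne (m+1) (by omega), hGne (m+2) (by omega)]
            exact hcon
    · intro t
      rw [hGne (2*t+1) (by omega)]
      exact hv.2.2.2.1 t
    · intro m
      rcases eq_or_ne m (2*s+2) with rfl | hm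
      · rw [hG2]
        omega
      · rw [hGne m hm]
        exact hv.2.2.2.2.1 m
    · intro m hm
      rw [hGne m (by omega)]
      exact hv.2.2.2.2.2 m hm
  have hle := Fmin_le n B G hGvalid (2*s+2)
  rw [hG2, ← hF] at hle
  omega

end Spalt
namespace Spalt
open Finset

lemma spaltDual_special (n : ℕ) (lam : ℕ → ℕ) (hn : Even n) (hlam : IsDPartition n lam) :
    IsSpecialDPartition n (spaltDual n lam) := by
  have hp := hlam.1
  set B := Sp lam with hB
  have hex : ∃ S, ValidS n B S := exists_valid n B hn (Sp_zero lam) (fun m => Sp_le n lam hp m)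
  have hv : ValidS n B (Fmin n B) := validS_Fmin n B hex
  set F := Fmin n B with hF
  set q := pOf F with hq
  have hqp : IsPartitionFn n q := pOf_partition n B F hv
  have hqi : ∀ i, F (i+1) = F i + q (i+1) := by
    intro i
    have h1 := hv.2.1 i
    simp only [hq, pOf, Nat.add_sub_cancel]
    omega
  have hFpar : ∀ t, F (2*t+1) % 2 = 0 := by
    intro t
    rw [← Nat.even_iff]
    exact hv.2.2.2.1 t
  have hDpar : ∀ t, Even (Sp (transposeFn lam) (2*t+1)) := (Dchar n lam hp hn).mp hlam.2
  -- no marked pairs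
  have hmarked : ∀ s, q (2*s+2) % 2 = 1 → q (2*s+3) % 2 = 1 → q (2*s+2) = q (2*s+3) := by
    intro s h2 h3
    by_contra hne
    have hmq : q (2*s+3) ≤ q (2*s+2) := hqp.2.1 (2*s+2) (2*s+3) (by omega) (by omega)
    have e2 := hqi (2*s+1)
    rw [show 2*s+1+1 = 2*s+2 from by omega] at e2
    have e3 := hqi (2*s+2)
    rw [show 2*s+2+1 = 2*s+3 from by omega] at e3
    have f1 := hFpar s
    have f3 := hFpar (s+1)
    rw [show 2*(s+1)+1 = 2*s+3 from by omega] at f3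
    have hbase : B (2*s+2) + 1 ≤ F (2*s+2) := by
      have hble := hv.2.2.2.2.1 (2*s+2)
      rcases Nat.even_or_odd (B (2*s+2)) with he | ho
      · rw [Nat.even_iff] at he
        omega
      · rw [Nat.odd_iff] at ho
        obtain ⟨hc1, hc2⟩ := lemA n lam hn hp hDpar (m := 2*s+2) (by omega) (by omega)
          (by exact ho)
        have hB2 : B (2*s+2) = B (2*s+1) + lam (2*s+2) := by
          rw [hB]
          have := Sp_succ lam (2*s+1)
          rw [show 2*s+1+1 = 2*s+2 from by omega] at this
          omega
        have hB3 : B (2*s+3) = B (2*s+2) + lam (2*s+3) := by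
          rw [hB]
          have := Sp_succ lam (2*s+2)
          rw [show 2*s+2+1 = 2*s+3 from by omega] at this
          omega
        rw [show 2*s+2+1 = 2*s+3 from by omega] at hc1
        have hble1 := hv.2.2.2.2.1 (2*s+1)
        have hble3 := hv.2.2.2.2.1 (2*s+3)
        have hconc := hv.2.2.1 (2*s+1)
        rw [show 2*s+1+2 = 2*s+3 from by omega, show 2*s+1+1 = 2*s+2 from by omega] at hconc
        omega
    have hgap1 : F (2*s+1) + 1 ≤ F (2*s+2) := by omega
    have hgap2 : F (2*s+3) + F (2*s+1) + 2 ≤ 2 * F (2*s+2) := by omega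
    have hlt : 2*s+2 < n := by
      by_contra hge
      have s2 := hv.2.2.2.2.2 (2*s+2) (by omega)
      have s3 := hv.2.2.2.2.2 (2*s+3) (by omega)
      omega
    exact Fmin_dec n B hex s hbase hgap1 hgap2 hlt
  have hpair : ∀ s, (q (2*s+2) + q (2*s+3)) % 2 = 0 := by
    intro s
    have e2 := hqi (2*s+1)
    rw [show 2*s+1+1 = 2*s+2 from by omega] at e2
    have e3 := hqi (2*s+2)
    rw [show 2*s+2+1 = 2*s+3 from by omega] at e3
    have f1 := hFpar s
    have f3 := hFpar (s+1)
    rw [show 2*(s+1)+1 = 2*s+3 from by omega] at f3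
    omega
  have hq1 : q 1 % 2 = 0 := by
    have e := hqi 0
    rw [show (0:ℕ)+1 = 1 from rfl] at e
    have f := hFpar 0
    have f0 := hv.1
    rw [show 2*0+1 = 1 from by omega] at f
    omega
  -- C-ness of q
  have hqC : ∀ k, k % 2 = 1 → Even (partMult q k) := by
    intro k hk
    rw [partMult_eq_card n q hqp (by omega)]
    have key1 : ∀ s, 1 ≤ s → q (2*s) = k → q (2*s+1) = k := by
      intro s hs hqk
      obtain ⟨u, rfl⟩ : ∃ u, s = u + 1 := ⟨s - 1, by omega⟩
      rw [show 2*(u+1) = 2*u+2 from by omega] at hqk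
      rw [show 2*(u+1)+1 = 2*u+3 from by omega]
      have hpu := hpair u
      have h3 : q (2*u+3) % 2 = 1 := by omega
      have := hmarked u (by omega) h3
      omega
    have key2 : ∀ s, 1 ≤ s → q (2*s+1) = k → q (2*s) = k := by
      intro s hs hqk
      obtain ⟨u, rfl⟩ : ∃ u, s = u + 1 := ⟨s - 1, by omega⟩
      rw [show 2*(u+1)+1 = 2*u+3 from by omega] at hqk
      rw [show 2*(u+1) = 2*u+2 from by omega]
      have hpu := hpair u
      have h2 : q (2*u+2) % 2 = 1 := by omega
      have := hmarked u h2 (by omega)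
      omega
    set M := (Finset.Icc 1 n).filter (fun i => q i = k) with hM
    have hcard : (M.filter (fun i => i % 2 = 0)).card = (M.filter (fun i => i % 2 = 1)).card := by
      apply Finset.card_bij (fun i _ => i + 1)
      · intro a ha
        simp only [hM, Finset.mem_filter, Finset.mem_Icc] at ha ⊢
        obtain ⟨⟨⟨ha1, ha2⟩, ha3⟩, ha4⟩ := ha
        obtain ⟨s, rfl⟩ : ∃ s, a = 2*s := ⟨a / 2, by omega⟩
        have hs1 : 1 ≤ s := by omega
        have hqk1 : q (2*s+1) = k := key1 s hs1 ha3
        refine ⟨⟨⟨by omega, ?_⟩, hqk1⟩, by omega⟩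
        exact part_pos_le n q hqp (by omega)
      · intro a ha b hb hab
        omega
      · intro b hb
        simp only [hM, Finset.mem_filter, Finset.mem_Icc] at hb
        obtain ⟨⟨⟨hb1, hb2⟩, hb3⟩, hb4⟩ := hb
        have hbne1 : b ≠ 1 := by
          intro h1
          rw [h1] at hb3
          omega
        obtain ⟨s, rfl⟩ : ∃ s, b = 2*s+1 := ⟨b / 2, by omega⟩
        have hs1 : 1 ≤ s := by omega
        have hqk2 : q (2*s) = k := key2 s hs1 hb3
        refine ⟨2*s, ?_, by omega⟩
        simp only [hM, Finset.mem_filter, Finset.mem_Icc]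
        exact ⟨⟨⟨by omega, by omega⟩, hqk2⟩, by omega⟩
    have htot : (M.filter (fun i => i % 2 = 0)).card + (M.filter (fun i => ¬(i % 2 = 0))).card
        = M.card := Finset.card_filter_add_card_filter_not (s := M) (p := fun i => i % 2 = 0)
    have hfe : M.filter (fun i => ¬(i % 2 = 0)) = M.filter (fun i => i % 2 = 1) := by
      apply Finset.filter_congr
      intro x _
      constructor
      · intro h; omega
      · intro h; omega
    rw [hfe] at htot
    rw [← htot, hcard]
    exact ⟨_, rfl⟩
  -- assemble
  have hcol := spaltDual_isCollapse n lam hn hp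
  refine ⟨hcol.1, ?_⟩
  intro k hk
  have heq := spaltDual_eq n lam hn hp
  rw [heq, tr_tr n q hqp]
  exact hqC k (Nat.odd_iff.mp hk)

end Spalt
namespace Spalt
open Finset

def gfun (σ : ℕ → ℕ) (m : ℕ) : ℕ :=
  if m = 0 then 0 else if m % 2 = 1 then (if σ m % 2 = 1 then 1 else 0)
  else (if σ m = σ (m+1) ∧ σ m % 2 = 1 then 1 else 0)

noncomputable def Shat (σ : ℕ → ℕ) (m : ℕ) : ℕ := Sp σ m + gfun σ m

lemma gfun_zero (σ : ℕ → ℕ) : gfun σ 0 = 0 := by simp [gfun]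

lemma gfun_le (σ : ℕ → ℕ) (m : ℕ) : gfun σ m ≤ 1 := by
  rw [gfun]
  split_ifs <;> omega

lemma gfun_odd (σ : ℕ → ℕ) (m : ℕ) (h : m % 2 = 1) :
    gfun σ m = if σ m % 2 = 1 then 1 else 0 := by
  rw [gfun, if_neg (by omega : ¬(m = 0)), if_pos h]

lemma gfun_even (σ : ℕ → ℕ) (m : ℕ) (h0 : m % 2 = 0) (h : m ≠ 0) :
    gfun σ m = if σ m = σ (m+1) ∧ σ m % 2 = 1 then 1 else 0 := by
  rw [gfun, if_neg h, if_neg (by omega : ¬(m % 2 = 1))]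

lemma pair_par (σ : ℕ → ℕ) (hP3 : ∀ t, Sp σ (2*t) % 2 = 0) (u : ℕ) :
    (σ (2*u+1) + σ (2*u+2)) % 2 = 0 := by
  have h1 := hP3 u
  have h2 := hP3 (u+1)
  have e := Sp_two σ (2*u)
  rw [show 2*(u+1) = 2*u+2 from by omega] at h2
  omega

lemma shat_valid (n : ℕ) (σ : ℕ → ℕ) (hn : Even n) (hsp : IsPartitionFn n σ)
    (hP3 : ∀ t, Sp σ (2*t) % 2 = 0) : ValidS n (Sp σ) (Shat σ) := by
  have hnn := Nat.even_iff.mp hn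
  refine ⟨by simp [Shat, Sp_zero, gfun_zero], ?_, ?_, ?_, fun m => by simp [Shat], ?_⟩
  · -- monotone
    intro m
    have hstep : gfun σ m ≤ σ (m+1) + gfun σ (m+1) := by
      rcases Nat.eq_zero_or_pos m with rfl | hm0
      · rw [gfun_zero]; omega
      rcases Nat.mod_two_eq_zero_or_one m with hp | hp
      · rw [gfun_even σ m hp (by omega)]
        split_ifs with hc
        · obtain ⟨hc1, hc2⟩ := hc
          omega
        · omega
      · rw [gfun_odd σ m hp]
        split_ifs with hc
        · obtain ⟨u, rfl⟩ : ∃ u, m = 2*u+1 := ⟨m/2, by omega⟩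
          have hpp := pair_par σ hP3 u
          rw [show 2*u+1+1 = 2*u+2 from by omega]
          omega
        · omega
    have e := Sp_succ σ m
    simp only [Shat]
    omega
  · -- concave
    intro m
    have e1 := Sp_succ σ m
    have e2 := Sp_succ σ (m+1)
    rw [show m+1+1 = m+2 from by omega] at e2
    have hkey : σ (m+2) + gfun σ (m+2) + gfun σ m ≤ σ (m+1) + 2 * gfun σ (m+1) := by
      rcases Nat.mod_two_eq_zero_or_one m with hp | hp
      · -- m even
        obtain ⟨u, rfl⟩ : ∃ u, m = 2*u := ⟨m/2, by omega⟩
        have hpp := pair_par σ hP3 u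
        have hmono : σ (2*u+2) ≤ σ (2*u+1) := hsp.2.1 (2*u+1) (2*u+2) (by omega) (by omega)
        rw [gfun_odd σ (2*u+1) (by omega)]
        split_ifs with hc
        · have := gfun_le σ (2*u+2)
          have := gfun_le σ (2*u)
          omega
        · -- σ (2u+1) even hence σ(2u+2) even
          have hc2 : σ (2*u+2) % 2 = 0 := by omega
          have hg2 : gfun σ (2*u+2) = 0 := by
            rw [gfun_even σ (2*u+2) (by omega) (by omega), if_neg]
            intro ⟨a, b⟩
            omega
          have hg0 : gfun σ (2*u) = 0 := by
            rcases Nat.eq_zero_or_pos u with rfl | hu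
            · simpa using gfun_zero σ
            · rw [gfun_even σ (2*u) (by omega) (by omega), if_neg]
              intro ⟨a, b⟩
              rw [show 2*u+1 = 2*u+1 from rfl] at a
              omega
          omega
      · -- m odd
        obtain ⟨u, rfl⟩ : ∃ u, m = 2*u+1 := ⟨m/2, by omega⟩
        rw [show 2*u+1+1 = 2*u+2 from by omega, show 2*u+1+2 = 2*u+3 from by omega]
        have hpp := pair_par σ hP3 u
        have hmono : σ (2*u+3) ≤ σ (2*u+2) := hsp.2.1 (2*u+2) (2*u+3) (by omega) (by omega)
        rcases Nat.mod_two_eq_zero_or_one (σ (2*u+2)) with hc | hc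
        · -- σ(2u+2) even
          have hg1 : gfun σ (2*u+1) = 0 := by
            rw [gfun_odd σ (2*u+1) (by omega), if_neg (by omega)]
          have hg2 : gfun σ (2*u+2) = 0 := by
            rw [gfun_even σ (2*u+2) (by omega) (by omega), if_neg]
            intro ⟨a, b⟩
            omega
          rcases Nat.mod_two_eq_zero_or_one (σ (2*u+3)) with hc3 | hc3
          · have hg3 : gfun σ (2*u+3) = 0 := by
              rw [gfun_odd σ (2*u+3) (by omega), if_neg (by omega)]
            omega
          · have hg3 : gfun σ (2*u+3) = 1 := by
              rw [gfun_odd σ (2*u+3) (by omega), if_pos (by omega)]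
            omega
        · -- σ(2u+2) odd
          have hg1 : gfun σ (2*u+1) = 1 := by
            rw [gfun_odd σ (2*u+1) (by omega), if_pos (by omega)]
          rcases Nat.eq_or_lt_of_le hmono with heq | hlt
          · have hg2 : gfun σ (2*u+2) = 1 := by
              rw [gfun_even σ (2*u+2) (by omega) (by omega), if_pos ⟨heq.symm, hc⟩]
            have hg3 : gfun σ (2*u+3) = 1 := by
              rw [gfun_odd σ (2*u+3) (by omega), if_pos (by omega)]
            omega
          · have hg2 : gfun σ (2*u+2) = 0 := by
              rw [gfun_even σ (2*u+2) (by omega) (by omega), if_neg]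
              intro ⟨a, b⟩
              rw [show 2*u+2+1 = 2*u+3 from by omega] at a
              omega
            rcases Nat.mod_two_eq_zero_or_one (σ (2*u+3)) with hc3 | hc3
            · have hg3 : gfun σ (2*u+3) = 0 := by
                rw [gfun_odd σ (2*u+3) (by omega), if_neg (by omega)]
              omega
            · have hg3 : gfun σ (2*u+3) = 1 := by
                rw [gfun_odd σ (2*u+3) (by omega), if_pos (by omega)]
              omega
    simp only [Shat]
    omega
  · -- parity at odd positions
    intro t
    have e := Sp_succ σ (2*t)
    rw [show 2*t+1 = 2*t+1 from rfl] at e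
    have h3 := hP3 t
    rw [Nat.even_iff]
    simp only [Shat]
    rw [gfun_odd σ (2*t+1) (by omega)]
    rcases Nat.mod_two_eq_zero_or_one (σ (2*t+1)) with hc | hc
    · rw [if_neg (by omega)]
      omega
    · rw [if_pos (by omega)]
      omega
  · -- stabilization
    intro m hm
    have hSp := Sp_stab n σ hsp hm
    have hg : gfun σ m = 0 := by
      rcases Nat.eq_zero_or_pos m with rfl | hm0
      · exact gfun_zero σ
      rcases Nat.mod_two_eq_zero_or_one m with hp | hp
      · rw [gfun_even σ m hp (by omega), if_neg]
        intro ⟨a, b⟩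
        have h1 : σ (m+1) = 0 := hsp.2.2.1 (m+1) (by omega)
        omega
      · have hmn : n < m := by omega
        have h1 : σ m = 0 := hsp.2.2.1 m hmn
        rw [gfun_odd σ m hp, if_neg (by omega)]
    simp only [Shat]
    omega

lemma shat_min (n : ℕ) (σ : ℕ → ℕ) (hsp : IsPartitionFn n σ)
    (hP3 : ∀ t, Sp σ (2*t) % 2 = 0) (S : ℕ → ℕ) (hS : ValidS n (Sp σ) S) (m : ℕ) :
    Shat σ m ≤ S m := by
  have hbase := hS.2.2.2.2.1 m
  rcases Nat.eq_zero_or_pos (gfun σ m) with hg | hg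
  · simp only [Shat]
    omega
  have hg1 : gfun σ m = 1 := by
    have := gfun_le σ m
    omega
  have hm0 : m ≠ 0 := by
    intro h
    rw [h, gfun_zero] at hg1
    omega
  rcases Nat.mod_two_eq_zero_or_one m with hp | hp
  · -- m even: forced case
    obtain ⟨u, rfl⟩ : ∃ u, m = 2*u+2 := ⟨(m-2)/2, by omega⟩
    have hcond : σ (2*u+2) = σ (2*u+3) ∧ σ (2*u+2) % 2 = 1 := by
      by_contra hc
      rw [gfun_even σ (2*u+2) hp hm0, if_neg hc] at hg1
      omega
    obtain ⟨hceq, hcodd⟩ := hcond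
    have hpp := pair_par σ hP3 u
    have hSp2 := hP3 (u+1)
    rw [show 2*(u+1) = 2*u+2 from by omega] at hSp2
    have e1 := Sp_succ σ (2*u+1)
    rw [show 2*u+1+1 = 2*u+2 from by omega] at e1
    have e3 := Sp_succ σ (2*u+2)
    rw [show 2*u+2+1 = 2*u+3 from by omega] at e3
    have hS1ev := Nat.even_iff.mp (hS.2.2.2.1 u)
    have hS3ev := Nat.even_iff.mp (hS.2.2.2.1 (u+1))
    rw [show 2*(u+1)+1 = 2*u+3 from by omega] at hS3ev
    have hb1 := hS.2.2.2.2.1 (2*u+1)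
    have hb3 := hS.2.2.2.2.1 (2*u+3)
    have hconc := hS.2.2.1 (2*u+1)
    rw [show 2*u+1+2 = 2*u+3 from by omega, show 2*u+1+1 = 2*u+2 from by omega] at hconc
    simp only [Shat]
    omega
  · -- m odd: parity forced
    obtain ⟨u, rfl⟩ : ∃ u, m = 2*u+1 := ⟨m/2, by omega⟩
    have hcond : σ (2*u+1) % 2 = 1 := by
      by_contra hc
      rw [gfun_odd σ (2*u+1) hp, if_neg hc] at hg1
      omega
    have hSp0 := hP3 u
    have e1 := Sp_succ σ (2*u)
    have hSev := Nat.even_iff.mp (hS.2.2.2.1 u)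
    simp only [Shat]
    omega

end Spalt
namespace Spalt
open Finset

lemma spaltDual_invol (n : ℕ) (σ : ℕ → ℕ) (hn : Even n) (hsig : IsSpecialDPartition n σ) :
    spaltDual n (spaltDual n σ) = σ := by
  have hsp : IsPartitionFn n σ := hsig.1.1
  have htrσ : IsPartitionFn n (transposeFn σ) := tr_partition n σ hsp
  have hsD : ∀ t, Even (Sp (transposeFn σ) (2*t+1)) := (Dchar n σ hsp hn).mp hsig.1.2
  have hP3 : ∀ t, Sp σ (2*t) % 2 = 0 := by
    have hC := (Cchar n (transposeFn σ) htrσ).mp hsig.2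
    intro t
    have h := hC t
    rw [tr_tr n σ hsp] at h
    exact Nat.even_iff.mp h
  have hex : ∃ S, ValidS n (Sp σ) S :=
    exists_valid n (Sp σ) hn (Sp_zero σ) (fun m => Sp_le n σ hsp m)
  have hsv : ValidS n (Sp σ) (Shat σ) := shat_valid n σ hn hsp hP3
  have hFeq : Fmin n (Sp σ) = Shat σ := by
    funext m
    apply le_antisymm (Fmin_le n (Sp σ) (Shat σ) hsv m)
    obtain ⟨S, hS, hSe⟩ := Fmin_achieved n (Sp σ) hex m
    rw [← hSe]
    exact shat_min n σ hsp hP3 S hS m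
  set q := pOf (Shat σ) with hqdef
  have hqp : IsPartitionFn n q := pOf_partition n (Sp σ) (Shat σ) hsv
  have hSq : ∀ m, Sp q m = Shat σ m := Sp_pOf n (Sp σ) (Shat σ) hsv
  have hqi : ∀ i, Shat σ (i+1) = Shat σ i + q (i+1) := by
    intro i
    have h1 := hsv.2.1 i
    simp only [hqdef, pOf, Nat.add_sub_cancel]
    omega
  have hqnear : ∀ i, q i ≤ σ i + 1 ∧ σ i ≤ q i + 1 := by
    intro i
    rcases Nat.eq_zero_or_pos i with rfl | hi
    · rw [hqdef, pOf_zero, hsp.1]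
      omega
    obtain ⟨j, rfl⟩ : ∃ j, i = j + 1 := ⟨i - 1, by omega⟩
    have e := hqi j
    have e2 := Sp_succ σ j
    have g1 := gfun_le σ j
    have g2 := gfun_le σ (j+1)
    simp only [Shat] at e
    omega
  have htrq : IsPartitionFn n (transposeFn q) := tr_partition n q hqp
  have hbase : ∀ m, Sp (transposeFn q) m ≤ Sp (transposeFn σ) m := by
    apply dom_tr n σ q hsp hqp
    intro m
    rw [hSq m]
    simp [Shat]
  have hgap : ∀ m, 1 ≤ m → ∃ j, Sp (transposeFn σ) m = Sp (transposeFn q) m + gfun σ j ∧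
      transposeFn σ (m+1) ≤ j ∧ transposeFn q (m+1) ≤ j ∧
      j ≤ transposeFn σ m ∧ j ≤ transposeFn q m := by
    intro m hm
    have hσmono : transposeFn σ (m+1) ≤ transposeFn σ m := htrσ.2.1 m (m+1) (by omega) (by omega)
    have hqmono : transposeFn q (m+1) ≤ transposeFn q m := htrq.2.1 m (m+1) (by omega) (by omega)
    have h1 : transposeFn q (m+1) ≤ transposeFn σ m := by
      rcases Nat.eq_zero_or_pos (transposeFn q (m+1)) with h0 | hpos
      · omega
      · have hqi' : m+1 ≤ q (transposeFn q (m+1)) :=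
          (galois n q hqp hpos (by omega)).mpr le_rfl
        have hσi : m ≤ σ (transposeFn q (m+1)) := by
          have := (hqnear (transposeFn q (m+1))).1
          omega
        exact (galois n σ hsp hpos hm).mp hσi
    have h2 : transposeFn σ (m+1) ≤ transposeFn q m := by
      rcases Nat.eq_zero_or_pos (transposeFn σ (m+1)) with h0 | hpos
      · omega
      · have hσi' : m+1 ≤ σ (transposeFn σ (m+1)) :=
          (galois n σ hsp hpos (by omega)).mpr le_rfl
        have hqi2 : m ≤ q (transposeFn σ (m+1)) := by
          have := (hqnear (transposeFn σ (m+1))).2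
          omega
        exact (galois n q hqp hpos hm).mp hqi2
    refine ⟨max (transposeFn σ (m+1)) (transposeFn q (m+1)), ?_, le_max_left _ _,
      le_max_right _ _, by omega, by omega⟩
    have t1 := toolT n (transposeFn σ) htrσ hm
      (le_max_left (transposeFn σ (m+1)) (transposeFn q (m+1))) (by omega)
    rw [tr_tr n σ hsp] at t1
    have t2 := toolT n (transposeFn q) htrq hm
      (le_max_right (transposeFn σ (m+1)) (transposeFn q (m+1))) (by omega)
    rw [tr_tr n q hqp] at t2
    have hq_j : Sp q (max (transposeFn σ (m+1)) (transposeFn q (m+1)))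
        = Sp σ (max (transposeFn σ (m+1)) (transposeFn q (m+1)))
          + gfun σ (max (transposeFn σ (m+1)) (transposeFn q (m+1))) := by
      rw [hSq]
      rfl
    omega
  have hodd : ∀ S, ValidS n (Sp (transposeFn q)) S →
      ∀ t, Sp (transposeFn σ) (2*t+1) ≤ S (2*t+1) := by
    intro S hS t
    obtain ⟨j, he, _, _, _, _⟩ := hgap (2*t+1) (by omega)
    have hb := hS.2.2.2.2.1 (2*t+1)
    have hgle := gfun_le σ j
    rcases Nat.eq_zero_or_pos (gfun σ j) with h0 | h1
    · omega
    · have hWev := Nat.even_iff.mp (hsD t)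
      have hSev := Nat.even_iff.mp (hS.2.2.2.1 t)
      omega
  have hforce : ∀ S, ValidS n (Sp (transposeFn q)) S → ∀ m, Sp (transposeFn σ) m ≤ S m := by
    intro S hS m
    rcases Nat.eq_zero_or_pos m with rfl | hm
    · rw [Sp_zero]
      exact Nat.zero_le _
    rcases Nat.mod_two_eq_zero_or_one m with hp | hp
    · obtain ⟨u, rfl⟩ : ∃ u, m = 2*u+2 := ⟨(m-2)/2, by omega⟩
      obtain ⟨j, he, hj1, hj2, hj3, hj4⟩ := hgap (2*u+2) (by omega)
      rw [show 2*u+2+1 = 2*u+3 from by omega] at hj1 hj2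
      have hb := hS.2.2.2.2.1 (2*u+2)
      rcases Nat.eq_zero_or_pos (gfun σ j) with h0 | h1
      · omega
      have hj0 : 1 ≤ j := by
        rcases Nat.eq_zero_or_pos j with rfl | h
        · rw [gfun_zero] at h1
          omega
        · exact h
      have hσj : 2*u+2 ≤ σ j := (galois n σ hsp hj0 (by omega)).mpr hj3
      have htreq : transposeFn σ (2*u+2) = transposeFn σ (2*u+3) := by
        by_contra hne
        have hmono := htrσ.2.1 (2*u+2) (2*u+3) (by omega) (by omega)
        have hlt : transposeFn σ (2*u+3) < transposeFn σ (2*u+2) := by omega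
        have hσj1 : σ (j+1) ≤ 2*u+2 := by
          by_contra hgt
          have hgal : j+1 ≤ transposeFn σ (2*u+3) :=
            (galois n σ hsp (by omega) (by omega)).mp (by omega)
          omega
        rcases Nat.mod_two_eq_zero_or_one j with hjp | hjp
        · have hcond : σ j = σ (j+1) ∧ σ j % 2 = 1 := by
            by_contra hc
            rw [gfun_even σ j hjp (by omega), if_neg hc] at h1
            omega
          omega
        · have hcond : σ j % 2 = 1 := by
            by_contra hc
            rw [gfun_odd σ j hjp, if_neg hc] at h1
            omega
          have hσj' : 2*u+3 ≤ σ j := by omega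
          have hjle : j ≤ transposeFn σ (2*u+3) := (galois n σ hsp hj0 (by omega)).mp hσj'
          have hj1n : j+1 ≤ transposeFn σ (2*u+2) := by omega
          have hσj1' : 2*u+2 ≤ σ (j+1) := (galois n σ hsp (by omega) (by omega)).mpr hj1n
          obtain ⟨w, rfl⟩ : ∃ w, j = 2*w+1 := ⟨j/2, by omega⟩
          have hpp := pair_par σ hP3 w
          rw [show 2*w+1+1 = 2*w+2 from by omega] at hσj1 hσj1'
          omega
      have e1 := Sp_succ (transposeFn σ) (2*u+1)
      rw [show 2*u+1+1 = 2*u+2 from by omega] at e1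
      have e2 := Sp_succ (transposeFn σ) (2*u+2)
      rw [show 2*u+2+1 = 2*u+3 from by omega] at e2
      have hS1 := hodd S hS u
      have hS3 := hodd S hS (u+1)
      rw [show 2*(u+1)+1 = 2*u+3 from by omega] at hS3
      have hconc := hS.2.2.1 (2*u+1)
      rw [show 2*u+1+2 = 2*u+3 from by omega, show 2*u+1+1 = 2*u+2 from by omega] at hconc
      omega
    · obtain ⟨u, rfl⟩ : ∃ u, m = 2*u+1 := ⟨m/2, by omega⟩
      exact hodd S hS u
  have hWval : ValidS n (Sp (transposeFn q)) (Sp (transposeFn σ)) :=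
    validS_of_partition n (Sp (transposeFn q)) (transposeFn σ) htrσ hsD hbase
  have hexq : ∃ S, ValidS n (Sp (transposeFn q)) S := ⟨_, hWval⟩
  have hFq : Fmin n (Sp (transposeFn q)) = Sp (transposeFn σ) := by
    funext m
    apply le_antisymm (Fmin_le n _ _ hWval m)
    obtain ⟨S, hS, hSe⟩ := Fmin_achieved n _ hexq m
    rw [← hSe]
    exact hforce S hS m
  have h1 : spaltDual n σ = transposeFn q := by
    rw [spaltDual_eq n σ hn hsp, hFeq]
  rw [h1, spaltDual_eq n (transposeFn q) hn htrq, hFq,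
      pOf_Sp (transposeFn σ) (tr_zero σ), tr_tr n σ hsp]

end Spalt



/-- Spaltenstein duality `d(λ) = D(λᵀ)` on D-partitions of `2N`:
(i) the dual of a D-partition is a special D-partition;
(ii) duality is an involution on special D-partitions; hence (iii) `d ∘ d ∘ d = d`. -/
theorem spaltenstein_duality (N : ℕ) :
    (∀ lam : ℕ → ℕ, IsDPartition (2 * N) lam →
      IsSpecialDPartition (2 * N) (spaltDual (2 * N) lam)) ∧
    (∀ σ : ℕ → ℕ, IsSpecialDPartition (2 * N) σ →
      spaltDual (2 * N) (spaltDual (2 * N) σ) = σ) ∧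
    (∀ lam : ℕ → ℕ, IsDPartition (2 * N) lam →
      spaltDual (2 * N) (spaltDual (2 * N) (spaltDual (2 * N) lam))
        = spaltDual (2 * N) lam) := by
  have hn : Even (2 * N) := ⟨N, by omega⟩
  refine ⟨fun lam hlam => Spalt.spaltDual_special (2*N) lam hn hlam,
    fun σ hσ => Spalt.spaltDual_invol (2*N) σ hn hσ, fun lam hlam => ?_⟩
  exact Spalt.spaltDual_invol (2*N) (spaltDual (2*N) lam) hn
    (Spalt.spaltDual_special (2*N) lam hn hlam)
end

section
/- Let σ be a special D-partition of 2N admitting a non-special degeneration at position j with data (r, m) (i.e., σ_{2j} = 2r+1, σ_{2j+1} = … = σ_{2j+2m} = 2r, σ_{2j+2m+1} = 2r−1), and let σ' be the partition obtained by replacing the parts σ_{2j} = 2r+1 and σ_{2j+2m+1} = 2r−1 both by 2r. Then σ' is a D-partition of 2N, σ' is not special, and d(σ') = d(σ), where d(λ) := D(λ^T) is the Spaltenstein dual; in other words, σ' lies in the same special piece as σ. -/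
/-!
Moving one box of `σ` from row `2j` to row `2j+2m+1` lowers `σᵀ (2r+1)` by one and raises
`σᵀ (2r)` by one, so the partial sums of `σ'ᵀ` and `σᵀ` agree except at `2r`, where the former is
larger by one. If a D-partition `ν` were dominated by `σ'ᵀ` but not by `σᵀ`, its partial sum at
`2r` would exceed that of `σᵀ` by exactly one, and comparing the neighbouring partial sums shows
`ν` breaks there: `ν (2r) > ν (2r+1)`. At such a break the even parts of `ν` among the first `2r`
come in pairs, hence so do the odd ones, and the partial sum is even. The partial sum of the
C-partition `σᵀ` at `2r` is even as well, since `σᵀ (2r) = 2j+2m` is even and its odd parts come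
in pairs. So `σ'ᵀ` and `σᵀ` dominate the same D-partitions and have the same D-collapse.
Finally `σ'` is not special because the odd part `2j-1` of `σ'ᵀ` has multiplicity
`σ' (2j-1) - σ' (2j)`, one more than in `σᵀ`.
-/

open Finset

theorem sum_Icc_add_ite_eq {f g : ℕ → ℕ} {a b x y n : ℕ}
    (h : ∀ i ∈ Icc 1 n, f i + (if i = a then x else 0) = g i + (if i = b then y else 0)) :
    ∑ i ∈ Icc 1 n, f i + (if a ∈ Icc 1 n then x else 0) =
      ∑ i ∈ Icc 1 n, g i + (if b ∈ Icc 1 n then y else 0) := by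
  rw [← sum_ite_eq' _ a (fun _ => x), ← sum_ite_eq' _ b (fun _ => y), ← sum_add_distrib,
    ← sum_add_distrib]
  exact sum_congr rfl h

theorem sum_Icc_eq_sum_Icc_pred_add (f : ℕ → ℕ) {k : ℕ} (hk : 1 ≤ k) :
    ∑ i ∈ Icc 1 k, f i = ∑ i ∈ Icc 1 (k - 1), f i + f k := by
  conv_lhs => rw [← Nat.sub_add_cancel hk]
  rw [sum_Icc_succ_top (by omega), Nat.sub_add_cancel hk]

namespace IsPartitionFn

variable {n : ℕ} {p q : ℕ → ℕ}

theorem apply_le (hp : IsPartitionFn n p) {i j : ℕ} (hi : 1 ≤ i) (hij : i ≤ j) : p j ≤ p i :=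
  hp.2.1 i j hi hij

theorem le_of_apply_pos (hp : IsPartitionFn n p) {i : ℕ} (h : 0 < p i) : i ≤ n := by
  by_contra hi
  have := hp.2.2.1 i (by omega)
  omega

theorem finite_setOf_le_apply (hp : IsPartitionFn n p) {k : ℕ} (hk : 1 ≤ k) :
    {i | 1 ≤ i ∧ k ≤ p i}.Finite :=
  (Set.finite_Icc 1 n).subset fun _ hi => ⟨hi.1, hp.le_of_apply_pos (hk.trans hi.2)⟩

theorem le_transposeFn_iff (hp : IsPartitionFn n p) {i k : ℕ} (hi : 1 ≤ i) (hk : 1 ≤ k) :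
    i ≤ transposeFn p k ↔ k ≤ p i := by
  constructor
  · intro h
    by_contra hlt
    have hsub : {i' | 1 ≤ i' ∧ k ≤ p i'} ⊆ Set.Ico 1 i := fun i' hi' =>
      ⟨hi'.1, by by_contra hle; have := hp.apply_le hi (not_lt.1 hle); have := hi'.2; omega⟩
    have := Set.ncard_le_ncard hsub (Set.finite_Ico 1 i)
    rw [Set.ncard_Ico_nat] at this
    unfold transposeFn at h
    omega
  · intro h
    calc i = (Set.Icc 1 i).ncard := by simp
      _ ≤ transposeFn p k := Set.ncard_le_ncard
          (fun i' hi' => ⟨hi'.1, h.trans (hp.apply_le hi'.1 hi'.2)⟩) (hp.finite_setOf_le_apply hk)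

theorem transposeFn_eq (hp : IsPartitionFn n p) {k M : ℕ} (hk : 1 ≤ k) (hM : 1 ≤ M)
    (hle : k ≤ p M) (hlt : p (M + 1) < k) : transposeFn p k = M := by
  have h₁ := (hp.le_transposeFn_iff hM hk).2 hle
  have h₂ := mt (hp.le_transposeFn_iff (by omega : 1 ≤ M + 1) hk).1 (by omega)
  omega

theorem transposeFn_anti (hp : IsPartitionFn n p) :
    ∀ k l, 1 ≤ k → k ≤ l → transposeFn p l ≤ transposeFn p k := fun _ _ hk hkl =>
  Set.ncard_le_ncard (fun _ hi => ⟨hi.1, hkl.trans hi.2⟩) (hp.finite_setOf_le_apply hk)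

theorem partMult_transposeFn (hp : IsPartitionFn n p) {k : ℕ} (hk : 1 ≤ k) :
    partMult (transposeFn p) k + p (k + 1) = p k := by
  have hset : {c | 1 ≤ c ∧ transposeFn p c = k} = Set.Ioc (p (k + 1)) (p k) := by
    ext c
    simp only [Set.mem_ofPred_eq, Set.mem_Ioc]
    constructor
    · rintro ⟨hc, rfl⟩
      exact ⟨lt_of_not_ge fun h => by
          have := (hp.le_transposeFn_iff (by omega) hc).2 h; omega,
        (hp.le_transposeFn_iff hk hc).1 le_rfl⟩
    · rintro ⟨hlt, hle⟩
      exact ⟨by omega, (hp.transposeFn_eq (by omega) hk hle hlt)⟩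
  have := hp.apply_le hk (Nat.le_add_right k 1)
  rw [partMult, hset, Set.ncard_Ioc_nat]
  omega

theorem ncard_setOf_eq_card_filter (hp : IsPartitionFn n p) {P : ℕ → Prop} [DecidablePred P]
    (hP : ∀ i, P i → 0 < p i) : {i | 1 ≤ i ∧ P i}.ncard = #{i ∈ Icc 1 n | P i} := by
  rw [← Set.ncard_coe_finset]
  congr 1
  ext i
  simp only [Set.mem_ofPred_eq, coe_filter, mem_Icc]
  exact ⟨fun h => ⟨⟨h.1, hp.le_of_apply_pos (hP i h.2)⟩, h.2⟩, fun h => ⟨h.1.1, h.2⟩⟩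

theorem transposeFn_eq_sum (hp : IsPartitionFn n p) {k : ℕ} (hk : 1 ≤ k) :
    transposeFn p k = ∑ i ∈ Icc 1 n, if k ≤ p i then 1 else 0 := by
  rw [← card_filter, transposeFn, hp.ncard_setOf_eq_card_filter fun _ h => by omega]

/-- `hbox` says that `q` arises from `p` by moving one box from row `a` to row `b`. -/
theorem of_moveBox (hp : IsPartitionFn n p) (hq : ∀ i j, 1 ≤ i → i ≤ j → q j ≤ q i) {a b : ℕ}
    (ha : a ∈ Icc 1 n) (hb : b ∈ Icc 1 n)
    (hbox : ∀ i, q i + (if i = a then 1 else 0) = p i + (if i = b then 1 else 0)) :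
    IsPartitionFn n q := by
  have ha' := mem_Icc.1 ha
  have hb' := mem_Icc.1 hb
  refine ⟨?_, hq, fun i hi => ?_, ?_⟩
  · have := hbox 0
    rw [if_neg (by omega), if_neg (by omega), hp.1] at this
    omega
  · have := hbox i
    rw [if_neg (by omega), if_neg (by omega), hp.2.2.1 i hi] at this
    omega
  · have := sum_Icc_add_ite_eq (n := n) fun i _ => hbox i
    rw [if_pos ha, if_pos hb, hp.2.2.2] at this
    omega

theorem transposeFn_add_ite_of_moveBox (hp : IsPartitionFn n p) (hq : IsPartitionFn n q)
    {a b c : ℕ} (ha : a ∈ Icc 1 n) (hb : b ∈ Icc 1 n) (hc : 1 ≤ c)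
    (hbox : ∀ i, q i + (if i = a then 1 else 0) = p i + (if i = b then 1 else 0)) :
    transposeFn q c + (if c = p a then 1 else 0) =
      transposeFn p c + (if c = q b then 1 else 0) := by
  have := sum_Icc_add_ite_eq (n := n) (a := a) (b := b)
    (f := fun i => if c ≤ q i then 1 else 0) (g := fun i => if c ≤ p i then 1 else 0)
    (x := if c = p a then 1 else 0) (y := if c = q b then 1 else 0) fun i _ => by
      have h := hbox i
      rcases eq_or_ne i a with rfl | hia <;> rcases eq_or_ne i b with rfl | hib
      all_goals split_ifs at h ⊢ <;> omega
  rwa [if_pos ha, if_pos hb, ← hq.transposeFn_eq_sum hc, ← hp.transposeFn_eq_sum hc] at this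

end IsPartitionFn

/-- If `hcut` holds, no value satisfying `P` occurs both among the first `M` parts and after them,
so the parts counted here form whole multiplicity classes. -/
theorem even_card_filter_Icc {p : ℕ → ℕ} {P : ℕ → Prop} [DecidablePred P] {M : ℕ}
    (hp : ∀ i j, 1 ≤ i → i ≤ j → p j ≤ p i) (hP : ∀ k, P k → Even (partMult p k))
    (hcut : P (p M) → p (M + 1) < p M) : Even #{i ∈ Icc 1 M | P (p i)} := by
  rw [card_eq_sum_card_image p]
  refine even_sum _ fun k hk => ?_
  obtain ⟨x, hx, rfl⟩ := mem_image.1 hk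
  obtain ⟨hxM, hPx⟩ := mem_filter.1 hx
  rw [mem_Icc] at hxM
  have hfiber : {i | 1 ≤ i ∧ p i = p x} =
      ↑({a ∈ {i ∈ Icc 1 M | P (p i)} | p a = p x} : Finset ℕ) := by
    ext i
    simp only [Set.mem_ofPred_eq, coe_filter, mem_filter, mem_Icc]
    refine ⟨fun ⟨hi, hpi⟩ => ⟨⟨⟨hi, ?_⟩, hpi ▸ hPx⟩, hpi⟩, fun h => ⟨h.1.1.1, h.2⟩⟩
    by_contra hiM
    have h₁ := hp x M hxM.1 hxM.2
    have h₂ := hp (M + 1) i (by omega) (by omega)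
    have h₃ := hp M (M + 1) (by omega) (by omega)
    have := hcut (show p M = p x by omega ▸ hPx)
    omega
  rw [← Set.ncard_coe_finset, ← hfiber]
  exact hP _ hPx

theorem IsDPartition.even_sum_Icc {n M : ℕ} {p : ℕ → ℕ} (hp : IsDPartition n p) (hM : Even M)
    (hcut : p (M + 1) < p M) : Even (∑ i ∈ Icc 1 M, p i) := by
  have hev := even_card_filter_Icc (P := Even) hp.1.2.1 hp.2 fun _ => hcut
  have hcard := card_filter_add_card_filter_not (s := Icc 1 M) fun i => Even (p i)
  simp only [Nat.not_even_iff_odd, Nat.card_Icc, Nat.add_sub_cancel] at hcard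
  rw [even_sum_iff_even_card_odd]
  rw [← hcard, Nat.even_add] at hM
  exact hM.1 hev

theorem even_sum_Icc_of_even_partMult_odd {M : ℕ} {p : ℕ → ℕ}
    (hp : ∀ i j, 1 ≤ i → i ≤ j → p j ≤ p i) (hodd : ∀ k, Odd k → Even (partMult p k))
    (hcut : Odd (p M) → p (M + 1) < p M) : Even (∑ i ∈ Icc 1 M, p i) :=
  (even_sum_iff_even_card_odd p).2 (even_card_filter_Icc hp hodd hcut)

theorem dominatesFn_iff_of_moveBox {lam lam' nu : ℕ → ℕ} {M : ℕ} (hM : 1 ≤ M)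
    (hbox : ∀ i, 1 ≤ i → lam' i + (if i = M + 1 then 1 else 0) = lam i + (if i = M then 1 else 0))
    (hlam : lam (M + 1) ≤ lam M) (hpar : Even (∑ i ∈ Icc 1 M, lam i))
    (hnu : nu (M + 1) < nu M → Even (∑ i ∈ Icc 1 M, nu i)) :
    DominatesFn lam' nu ↔ DominatesFn lam nu := by
  have hsum (k : ℕ) := sum_Icc_add_ite_eq (n := k) fun i hi => hbox i (mem_Icc.1 hi).1
  have hoff : ∀ k, k ≠ M → ∑ i ∈ Icc 1 k, lam' i = ∑ i ∈ Icc 1 k, lam i := fun k hk => by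
    have := hsum k
    simp only [mem_Icc] at this
    split_ifs at this <;> omega
  have hon : ∑ i ∈ Icc 1 M, lam' i = ∑ i ∈ Icc 1 M, lam i + 1 := by
    have := hsum M
    rwa [if_neg (by simp), if_pos (by simp [hM])] at this
  refine ⟨fun h k => ?_, fun h k => ?_⟩
  · rcases eq_or_ne k M with rfl | hk
    · refine le_of_not_gt fun hlt => ?_
      have hν : ∑ i ∈ Icc 1 k, nu i = ∑ i ∈ Icc 1 k, lam i + 1 := by have := h k; omega
      have hbreak : nu (k + 1) < nu k := by
        have hbelow := hoff (k - 1) (by omega) ▸ h (k - 1)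
        have habove := hoff (k + 1) (by omega) ▸ h (k + 1)
        have e₁ := sum_Icc_eq_sum_Icc_pred_add nu hM
        have e₂ := sum_Icc_eq_sum_Icc_pred_add lam hM
        have e₃ := sum_Icc_succ_top (show 1 ≤ k + 1 by omega) nu
        have e₄ := sum_Icc_succ_top (show 1 ≤ k + 1 by omega) lam
        omega
      exact Nat.not_even_iff_odd.2 hpar.add_one (hν ▸ hnu hbreak)
    · exact hoff k hk ▸ h k
  · rcases eq_or_ne k M with rfl | hk
    · exact (h k).trans (hon ▸ Nat.le_succ _)
    · exact (hoff k hk).symm ▸ h k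

theorem Dcollapse_congr {n : ℕ} {lam lam' : ℕ → ℕ}
    (h : ∀ nu, IsDPartition n nu → (DominatesFn lam nu ↔ DominatesFn lam' nu)) :
    Dcollapse n lam = Dcollapse n lam' := by
  have hcol : IsDCollapseOf n lam = IsDCollapseOf n lam' := by
    ext mu
    exact ⟨fun ⟨hD, hdom, hmax⟩ => ⟨hD, (h mu hD).1 hdom, fun nu hnu => hmax nu hnu ∘ (h nu hnu).2⟩,
      fun ⟨hD, hdom, hmax⟩ => ⟨hD, (h mu hD).2 hdom, fun nu hnu => hmax nu hnu ∘ (h nu hnu).1⟩⟩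
  unfold Dcollapse
  rw [hcol]

theorem IsDPartition.of_replace_odd_pair {n a b v : ℕ} {p q : ℕ → ℕ} (hp : IsDPartition n p)
    (hq : IsPartitionFn n q) (ha : 1 ≤ a) (hb : 1 ≤ b) (hab : a ≠ b) (hpa : Odd (p a))
    (hpb : Odd (p b)) (hv : 0 < v) (hqp : q = fun i => if i = a ∨ i = b then v else p i) :
    IsDPartition n q := by
  refine ⟨hq, fun k hk => ?_⟩
  subst hqp
  rcases eq_or_ne k v with rfl | hkv
  · have hfin : {i | 1 ≤ i ∧ p i = k}.Finite :=
      (Set.finite_Icc 1 n).subset fun i hi => ⟨hi.1, hp.1.le_of_apply_pos (hi.2 ▸ hv)⟩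
    have hset : {i | 1 ≤ i ∧ (if i = a ∨ i = b then k else p i) = k} =
        insert a (insert b {i | 1 ≤ i ∧ p i = k}) := by
      ext i
      simp only [Set.mem_insert_iff, Set.mem_ofPred_eq]
      split_ifs with h <;> grind
    have ha' : a ∉ insert b {i | 1 ≤ i ∧ p i = k} := by
      rintro (h | ⟨-, h⟩)
      exacts [hab h, (Nat.not_even_iff_odd.2 hpa) (h ▸ hk)]
    have hb' : b ∉ {i | 1 ≤ i ∧ p i = k} := fun h => Nat.not_even_iff_odd.2 hpb (h.2 ▸ hk)
    rw [partMult, hset, Set.ncard_insert_of_notMem ha' (hfin.insert b),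
      Set.ncard_insert_of_notMem hb' hfin]
    exact (hp.2 k hk).add_one.add_one
  · have hodd : ∀ i, (i = a ∨ i = b) → p i ≠ k := by
      rintro i (rfl | rfl) rfl <;> exact Nat.not_even_iff_odd.2 ‹_› hk
    have hmult : partMult (fun i => if i = a ∨ i = b then v else p i) k = partMult p k := by
      unfold partMult
      congr 1
      ext i
      simp only [Set.mem_ofPred_eq]
      split_ifs with h
      · exact ⟨fun h' => absurd h'.2.symm hkv, fun h' => absurd h'.2 (hodd i h)⟩
      · rfl
    exact hmult ▸ hp.2 k hk

theorem IsSpecialDPartition.not_of_lower {n k : ℕ} {p q : ℕ → ℕ} (hp : IsSpecialDPartition n p)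
    (hq : IsPartitionFn n q) (hk : Odd k) (hkeep : q k = p k) (hlower : q (k + 1) + 1 = p (k + 1)) :
    ¬ IsSpecialDPartition n q := by
  intro hqs
  have hk1 : 1 ≤ k := hk.pos
  have hpk := hp.1.1.partMult_transposeFn hk1
  have hqk := hq.partMult_transposeFn hk1
  have : partMult (transposeFn q) k = partMult (transposeFn p) k + 1 := by omega
  exact Nat.not_even_iff_odd.2 ((hp.2 k hk).add_one) (this ▸ hqs.2 k hk)

theorem degeneration_rows {j r m : ℕ} {σ σ' : ℕ → ℕ} (hr : 1 ≤ r)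
    (h1 : σ (2 * j) = 2 * r + 1) (h3 : σ (2 * j + 2 * m + 1) = 2 * r - 1)
    (hσ' : σ' = fun i => if i = 2 * j ∨ i = 2 * j + 2 * m + 1 then 2 * r else σ i) (i : ℕ) :
    σ' i + (if i = 2 * j then 1 else 0) = σ i + (if i = 2 * j + 2 * m + 1 then 1 else 0) := by
  subst hσ'
  have hne : 2 * j ≠ 2 * j + 2 * m + 1 := by omega
  by_cases h : i = 2 * j <;> by_cases h' : i = 2 * j + 2 * m + 1 <;>
    simp [h, h', hne, hne.symm] <;> omega

theorem degeneration_antitone {n j r m : ℕ} {σ σ' : ℕ → ℕ} (hσ : IsPartitionFn n σ) (hr : 1 ≤ r)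
    (h1 : σ (2 * j) = 2 * r + 1)
    (h2 : ∀ i, 2 * j + 1 ≤ i → i ≤ 2 * j + 2 * m → σ i = 2 * r)
    (h3 : σ (2 * j + 2 * m + 1) = 2 * r - 1)
    (hσ' : σ' = fun i => if i = 2 * j ∨ i = 2 * j + 2 * m + 1 then 2 * r else σ i) :
    ∀ i i', 1 ≤ i → i ≤ i' → σ' i' ≤ σ' i := by
  have hpos : ∀ i, 1 ≤ i → (i < 2 * j ∧ σ' i = σ i ∧ 2 * r < σ i) ∨
      (2 * j ≤ i ∧ i ≤ 2 * j + 2 * m + 1 ∧ σ' i = 2 * r) ∨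
      (2 * j + 2 * m + 1 < i ∧ σ' i = σ i ∧ σ i < 2 * r) := by
    intro i hi
    subst hσ'
    rcases lt_or_ge i (2 * j) with hlt | hge
    · have := hσ.apply_le hi hlt.le
      exact Or.inl ⟨hlt, if_neg (by omega), by omega⟩
    rcases le_or_gt i (2 * j + 2 * m + 1) with hle | hgt
    · refine Or.inr (Or.inl ⟨hge, hle, ?_⟩)
      dsimp only
      split_ifs with h
      · rfl
      · exact h2 i (by omega) (by omega)
    · have := hσ.apply_le (by omega : 1 ≤ 2 * j + 2 * m + 1) hgt.le
      exact Or.inr (Or.inr ⟨hgt, if_neg (by omega), by omega⟩)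
  intro i i' hi hii'
  have := hσ.apply_le hi hii'
  rcases hpos i hi with h | h | h <;> rcases hpos i' (by omega) with h' | h' | h' <;> omega

/-- Performing a non-special degeneration at position `j` (replacing the parts
`σ (2j) = 2r+1` and `σ (2j+2m+1) = 2r-1` both by `2r`) on a special D-partition `σ`
yields a non-special D-partition `σ'` with the same Spaltenstein dual, i.e. `σ'`
lies in the same special piece as `σ`. -/
theorem nonspecial_degeneration_stays_in_special_piece (N j r m : ℕ) (σ σ' : ℕ → ℕ)
    (hσ : IsSpecialDPartition (2 * N) σ) (hj : 1 ≤ j) (hr : 1 ≤ r)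
    (h1 : σ (2 * j) = 2 * r + 1)
    (h2 : ∀ i, 2 * j + 1 ≤ i → i ≤ 2 * j + 2 * m → σ i = 2 * r)
    (h3 : σ (2 * j + 2 * m + 1) = 2 * r - 1)
    (hσ' : σ' = fun i => if i = 2 * j ∨ i = 2 * j + 2 * m + 1 then 2 * r else σ i) :
    IsDPartition (2 * N) σ' ∧ ¬ IsSpecialDPartition (2 * N) σ' ∧
      spaltDual (2 * N) σ' = spaltDual (2 * N) σ := by
  have hσp := hσ.1.1
  have hK : 2 * j + 2 * m + 1 ∈ Icc 1 (2 * N) :=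
    mem_Icc.2 ⟨by omega, hσp.le_of_apply_pos (by omega)⟩
  have h2j : 2 * j ∈ Icc 1 (2 * N) := mem_Icc.2 ⟨by omega, by have := mem_Icc.1 hK; omega⟩
  have hrows := degeneration_rows hr h1 h3 hσ'
  have hσ'p := hσp.of_moveBox (degeneration_antitone hσp hr h1 h2 h3 hσ') h2j hK hrows
  have hσ'D : IsDPartition (2 * N) σ' := hσ.1.of_replace_odd_pair hσ'p (by omega) (by omega)
    (by omega) (h1 ▸ ⟨r, rfl⟩) (h3 ▸ ⟨r - 1, by omega⟩) (by omega) hσ'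
  have hσ'ns : ¬ IsSpecialDPartition (2 * N) σ' :=
    hσ.not_of_lower hσ'p (k := 2 * j - 1) ⟨j - 1, by omega⟩ (by simp [hσ']; omega)
      (by simp [hσ', Nat.sub_add_cancel (show 1 ≤ 2 * j by omega), h1])
  have hcols (c : ℕ) (hc : 1 ≤ c) : transposeFn σ' c + (if c = 2 * r + 1 then 1 else 0) =
      transposeFn σ c + (if c = 2 * r then 1 else 0) := by
    simpa [h1, hσ'] using hσp.transposeFn_add_ite_of_moveBox hσ'p h2j hK hc hrows
  have hτ : transposeFn σ (2 * r) = 2 * j + 2 * m := by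
    refine hσp.transposeFn_eq (by omega) (by omega) ?_ (by omega)
    rcases Nat.eq_zero_or_pos m with rfl | hm
    · simp [h1]
    · rw [h2 _ (by omega) le_rfl]
  have hpar := even_sum_Icc_of_even_partMult_odd (M := 2 * r) hσp.transposeFn_anti hσ.2
    fun h => absurd h (by rw [hτ, Nat.not_odd_iff_even]; exact ⟨j + m, by ring⟩)
  exact ⟨hσ'D, hσ'ns, Dcollapse_congr fun ν hν => dominatesFn_iff_of_moveBox (by omega) hcols
    (hσp.transposeFn_anti _ _ (by omega) (by omega)) hpar (hν.even_sum_Icc (even_two_mul r))⟩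
end
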